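/- arXiv:1505.07403 — 6 statements merged into one kernel-verified Lean document; each statement's English description precedes it below -/
import Mathlib

section
/- Let N ≥ 1, R > 0, Γ ∈ (0,1) and Q ∈ (0,∞), and let Ω = B_R be the open Euclidean ball of radius R centered at the origin in ℝ^N. Then the limit eigenvalue Λ_∞(Γ,Q;B_R), defined as the infimum over the admissible class A_∞(B_R) of the quotient max{Lip(w), Lip(z)^Q} / max_{x ∈ cl(B_R)} (|w(x)|^Γ |z(x)|^{(1−Γ)Q}), equals exactly ((Γ + Q(1−Γ))/(Γ R))^Γ · ((Γ + Q(1−Γ))/(Q(1−Γ) R))^{(1−Γ)Q}. -/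
open Real Set Filter

noncomputable section

/-- The best Lipschitz constant of `f` on the set `S`. -/
def bestLip {N : ℕ} (f : EuclideanSpace ℝ (Fin N) → ℝ)
    (S : Set (EuclideanSpace ℝ (Fin N))) : ℝ :=
  sInf {K : ℝ | 0 ≤ K ∧ ∀ x ∈ S, ∀ y ∈ S, |f x - f y| ≤ K * dist x y}

/-- `f` is Lipschitz on the set `S`. -/
def IsLipschitzOnSet {N : ℕ} (f : EuclideanSpace ℝ (Fin N) → ℝ)
    (S : Set (EuclideanSpace ℝ (Fin N))) : Prop :=
  ∃ K : NNReal, LipschitzOnWith K f S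

/-- The admissible class `A_∞(Ω)`: pairs `(w,z)` of Lipschitz functions on `cl Ω`,
with `w = 0` on `∂Ω`, `w·z` not identically zero on `cl Ω`, and
`max_{cl Ω} |w|^Γ (z⁺)^{(1-Γ)Q} = max_{cl Ω} |w|^Γ (z⁻)^{(1-Γ)Q}`. -/
def AdmClass {N : ℕ} (Γ Q : ℝ) (Ω : Set (EuclideanSpace ℝ (Fin N))) :
    Set ((EuclideanSpace ℝ (Fin N) → ℝ) × (EuclideanSpace ℝ (Fin N) → ℝ)) :=
  {wz | IsLipschitzOnSet wz.1 (closure Ω) ∧ IsLipschitzOnSet wz.2 (closure Ω) ∧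
    (∀ x ∈ frontier Ω, wz.1 x = 0) ∧
    (∃ x ∈ closure Ω, wz.1 x * wz.2 x ≠ 0) ∧
    sSup ((fun x => |wz.1 x| ^ Γ * (max (wz.2 x) 0) ^ ((1 - Γ) * Q)) '' closure Ω) =
      sSup ((fun x => |wz.1 x| ^ Γ * (max (-wz.2 x) 0) ^ ((1 - Γ) * Q)) '' closure Ω)}

/-- The limit eigenvalue `Λ_∞(Γ,Q;Ω)`. -/
def LambdaInfty {N : ℕ} (Γ Q : ℝ) (Ω : Set (EuclideanSpace ℝ (Fin N))) : ℝ :=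
  sInf ((fun wz => max (bestLip wz.1 (closure Ω)) (bestLip wz.2 (closure Ω) ^ Q) /
    sSup ((fun x => |wz.1 x| ^ Γ * |wz.2 x| ^ ((1 - Γ) * Q)) '' closure Ω)) ''
      AdmClass Γ Q Ω)

/-!
Both bounds come from one pointwise estimate. For an admissible pair `(w, z)` with Lipschitz
constants `L` and `V`, vanishing on the sphere gives `|w x| ≤ L (R - ‖x‖)`, and if `z 0 ≤ 0` then
`z⁺ x ≤ V ‖x‖`; so by weighted AM-GM `|w x|^Γ (z⁺ x)^β ≤ L^Γ V^β m`, where `β = (1-Γ)Q` and `m` is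
the maximum of `d^Γ c^β` on `d + c = R`. If `z 0 ≥ 0` the same holds for `z⁻`, and the balance
condition transfers the bound from one sign to the other, hence to `|w|^Γ |z|^β`. Finally
`L^Γ V^β = L^Γ (V^Q)^(1-Γ) ≤ max L (V^Q)`. Equality is attained by `w x = R - ‖x‖`,
`z x = ⟪e, x⟫` with `‖e‖ = 1`, whose product peaks at `x = (β R / (Γ + β)) • e`.
-/

open Metric

/-- The maximum of `d ^ Γ * c ^ β` over `d, c ≥ 0` with `d + c = R`. -/
def rpowProdMax (Γ β R : ℝ) : ℝ :=
  (Γ * R / (Γ + β)) ^ Γ * (β * R / (Γ + β)) ^ β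

lemma rpowProdMax_pos {Γ β R : ℝ} (hΓ : 0 < Γ) (hβ : 0 < β) (hR : 0 < R) :
    0 < rpowProdMax Γ β R := by
  unfold rpowProdMax; positivity

lemma inv_rpowProdMax {Γ β R : ℝ} (hΓ : 0 ≤ Γ) (hβ : 0 ≤ β) (hR : 0 ≤ R) :
    (rpowProdMax Γ β R)⁻¹ = ((Γ + β) / (Γ * R)) ^ Γ * ((Γ + β) / (β * R)) ^ β := by
  rw [rpowProdMax, mul_inv, ← Real.inv_rpow (by positivity), ← Real.inv_rpow (by positivity),
    inv_div, inv_div]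

lemma rpow_mul_rpow_le_rpowProdMax {Γ β R d c : ℝ} (hΓ : 0 < Γ) (hβ : 0 < β) (hd : 0 ≤ d)
    (hc : 0 ≤ c) (hdc : d + c ≤ R) : d ^ Γ * c ^ β ≤ rpowProdMax Γ β R := by
  set s := Γ + β
  have hs : 0 < s := add_pos hΓ hβ
  have hR : 0 ≤ R := by linarith
  have amgm : (d * s / Γ) ^ (Γ / s) * (c * s / β) ^ (β / s) ≤ R := by
    refine (Real.geom_mean_le_arith_mean2_weighted (by positivity) (by positivity)
      (by positivity) (by positivity) (by rw [← add_div, div_self hs.ne'])).trans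
      (le_of_eq_of_le ?_ hdc)
    field_simp
  have amgm_pow : (d * s / Γ) ^ Γ * (c * s / β) ^ β ≤ R ^ Γ * R ^ β :=
    calc (d * s / Γ) ^ Γ * (c * s / β) ^ β
        = ((d * s / Γ) ^ (Γ / s) * (c * s / β) ^ (β / s)) ^ s := by
          rw [Real.mul_rpow (by positivity) (by positivity), ← Real.rpow_mul (by positivity),
            ← Real.rpow_mul (by positivity), div_mul_cancel₀ _ hs.ne', div_mul_cancel₀ _ hs.ne']
      _ ≤ R ^ s := Real.rpow_le_rpow (by positivity) amgm hs.le
      _ = R ^ Γ * R ^ β := Real.rpow_add' hR hs.ne'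
  calc d ^ Γ * c ^ β = (d * s / Γ) ^ Γ * (c * s / β) ^ β * ((Γ / s) ^ Γ * (β / s) ^ β) := by
        rw [mul_mul_mul_comm, ← Real.mul_rpow (by positivity) (by positivity),
          ← Real.mul_rpow (by positivity) (by positivity)]
        congr 2 <;> field_simp
    _ ≤ R ^ Γ * R ^ β * ((Γ / s) ^ Γ * (β / s) ^ β) := by gcongr
    _ = rpowProdMax Γ β R := by
        rw [rpowProdMax, mul_mul_mul_comm, ← Real.mul_rpow hR (by positivity),
          ← Real.mul_rpow hR (by positivity)]
        congr 2 <;> ring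

lemma rpow_mul_rpow_one_sub_le_max {a b Γ : ℝ} (ha : 0 ≤ a) (hb : 0 ≤ b) (hΓ₀ : 0 ≤ Γ)
    (hΓ₁ : Γ ≤ 1) : a ^ Γ * b ^ (1 - Γ) ≤ max a b :=
  (Real.geom_mean_le_arith_mean2_weighted hΓ₀ (by linarith) ha hb (by ring)).trans
    (by nlinarith [le_max_left a b, le_max_right a b])

lemma exists_norm_eq_dist_eq_sub_norm {E : Type*} [NormedAddCommGroup E] [NormedSpace ℝ E]
    [Nontrivial E] {R : ℝ} {x : E} (hx : ‖x‖ ≤ R) : ∃ y : E, ‖y‖ = R ∧ dist x y = R - ‖x‖ := by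
  obtain ⟨u, hu, hxu⟩ : ∃ u : E, ‖u‖ = 1 ∧ x = ‖x‖ • u := by
    rcases eq_or_ne x 0 with rfl | hx0
    · obtain ⟨u, hu⟩ := exists_norm_eq E zero_le_one
      exact ⟨u, hu, by simp⟩
    · refine ⟨‖x‖⁻¹ • x, norm_smul_inv_norm hx0, ?_⟩
      rw [smul_smul, mul_inv_cancel₀ (norm_ne_zero_iff.mpr hx0), one_smul]
  have hR : 0 ≤ R := (norm_nonneg x).trans hx
  refine ⟨R • u, by rw [norm_smul, hu, Real.norm_of_nonneg hR, mul_one], ?_⟩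
  rw [dist_eq_norm, hxu, norm_smul, norm_norm, ← sub_smul, norm_smul, hu, mul_one,
    Real.norm_eq_abs, abs_of_nonpos (by linarith)]
  ring

lemma sSup_image_posPart_le {E : Type*} [NormedAddCommGroup E] {Γ β R L V : ℝ} (hΓ : 0 < Γ)
    (hβ : 0 < β) (hR : 0 ≤ R) (hL : 0 ≤ L) (hV : 0 ≤ V) {w z : E → ℝ}
    (hw : ∀ x ∈ closedBall (0 : E) R, |w x| ≤ L * (R - ‖x‖))
    (hz : ∀ x ∈ closedBall (0 : E) R, |z x - z 0| ≤ V * ‖x‖) (hz0 : z 0 ≤ 0) :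
    sSup ((fun x => |w x| ^ Γ * max (z x) 0 ^ β) '' closedBall 0 R) ≤
      L ^ Γ * V ^ β * rpowProdMax Γ β R := by
  refine csSup_le ((nonempty_closedBall.mpr hR).image _) ?_
  rintro _ ⟨x, hx, rfl⟩
  have hxR : ‖x‖ ≤ R := mem_closedBall_zero_iff.mp hx
  have hzx : max (z x) 0 ≤ V * ‖x‖ :=
    max_le (by linarith [le_abs_self (z x - z 0), hz x hx]) (mul_nonneg hV (norm_nonneg x))
  calc |w x| ^ Γ * max (z x) 0 ^ β ≤ (L * (R - ‖x‖)) ^ Γ * (V * ‖x‖) ^ β := by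
        gcongr
        exact hw x hx
    _ = L ^ Γ * V ^ β * ((R - ‖x‖) ^ Γ * ‖x‖ ^ β) := by
        rw [Real.mul_rpow hL (by linarith), Real.mul_rpow hV (norm_nonneg x)]
        ring
    _ ≤ L ^ Γ * V ^ β * rpowProdMax Γ β R := by
        gcongr
        exact rpow_mul_rpow_le_rpowProdMax hΓ hβ (by linarith) (norm_nonneg x) (by linarith)

lemma lipschitzWith_one_const_sub_norm {E : Type*} [SeminormedAddCommGroup E] (R : ℝ) :
    LipschitzWith 1 fun x : E => R - ‖x‖ :=
  LipschitzWith.of_dist_le_mul fun x y => by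
    simpa [Real.dist_eq, dist_eq_norm, abs_sub_comm] using abs_norm_sub_norm_le x y

lemma lipschitzWith_one_inner_left {E : Type*} [NormedAddCommGroup E] [InnerProductSpace ℝ E]
    {e : E} (he : ‖e‖ = 1) : LipschitzWith 1 fun x => inner ℝ e x :=
  LipschitzWith.of_dist_le_mul fun x y => by
    simpa [Real.dist_eq, dist_eq_norm, he, ← inner_sub_right] using
      abs_real_inner_le_norm e (x - y)

lemma sSup_image_posPart_eq_negPart {E : Type*} [NormedAddCommGroup E] {Γ β R : ℝ}
    {w z : E → ℝ} (hw : ∀ x, w (-x) = w x) (hz : ∀ x, z (-x) = -z x) :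
    sSup ((fun x => |w x| ^ Γ * max (z x) 0 ^ β) '' closedBall 0 R) =
      sSup ((fun x => |w x| ^ Γ * max (-z x) 0 ^ β) '' closedBall 0 R) := by
  have hcomp : (fun x => |w x| ^ Γ * max (-z x) 0 ^ β) =
      (fun x => |w x| ^ Γ * max (z x) 0 ^ β) ∘ (fun x => -x) := by
    ext x
    simp [hw, hz]
  rw [hcomp, image_comp, image_neg_eq_neg, neg_closedBall, neg_zero]

lemma bddAbove_image_abs_rpow_mul_rpow {X : Type*} [TopologicalSpace X] {K : Set X}
    (hK : IsCompact K) {w z : X → ℝ} (hw : ContinuousOn w K) (hz : ContinuousOn z K)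
    {g : ℝ → ℝ} (hg : Continuous g) {Γ β : ℝ} (hΓ : 0 ≤ Γ) (hβ : 0 ≤ β) :
    BddAbove ((fun x => |w x| ^ Γ * g (z x) ^ β) '' K) :=
  hK.bddAbove_image <| (hw.abs.rpow_const fun _ _ => Or.inr hΓ).mul
    ((hg.comp_continuousOn hz).rpow_const fun _ _ => Or.inr hβ)

lemma abs_rpow_eq_max_posPart_negPart {β : ℝ} (hβ : 0 < β) (t : ℝ) :
    |t| ^ β = max (max t 0 ^ β) (max (-t) 0 ^ β) := by
  rcases le_total t 0 with ht | ht
  · rw [abs_of_nonpos ht, max_eq_right ht, max_eq_left (neg_nonneg.mpr ht),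
      Real.zero_rpow hβ.ne', max_eq_right (Real.rpow_nonneg (neg_nonneg.mpr ht) β)]
  · rw [abs_of_nonneg ht, max_eq_left ht, max_eq_right (neg_nonpos.mpr ht),
      Real.zero_rpow hβ.ne', max_eq_left (Real.rpow_nonneg ht β)]

lemma sSup_image_abs_rpow_mul_abs_rpow_le {E : Type*} [NormedAddCommGroup E] [ProperSpace E]
    {Γ β R L V : ℝ} (hΓ : 0 < Γ) (hβ : 0 < β) (hR : 0 ≤ R) (hL : 0 ≤ L) (hV : 0 ≤ V)
    {w z : E → ℝ} (hwc : ContinuousOn w (closedBall 0 R)) (hzc : ContinuousOn z (closedBall 0 R))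
    (hw : ∀ x ∈ closedBall (0 : E) R, |w x| ≤ L * (R - ‖x‖))
    (hz : ∀ x ∈ closedBall (0 : E) R, |z x - z 0| ≤ V * ‖x‖)
    (hsides : sSup ((fun x => |w x| ^ Γ * max (z x) 0 ^ β) '' closedBall 0 R) =
      sSup ((fun x => |w x| ^ Γ * max (-z x) 0 ^ β) '' closedBall 0 R)) :
    sSup ((fun x => |w x| ^ Γ * |z x| ^ β) '' closedBall 0 R) ≤
      L ^ Γ * V ^ β * rpowProdMax Γ β R := by
  have hbdd {g : ℝ → ℝ} (hg : Continuous g) :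
      BddAbove ((fun x => |w x| ^ Γ * g (z x) ^ β) '' closedBall 0 R) :=
    bddAbove_image_abs_rpow_mul_rpow (isCompact_closedBall 0 R) hwc hzc hg hΓ.le hβ.le
  have hpos : sSup ((fun x => |w x| ^ Γ * max (z x) 0 ^ β) '' closedBall 0 R) ≤
      L ^ Γ * V ^ β * rpowProdMax Γ β R := by
    rcases le_total (z 0) 0 with h | h
    · exact sSup_image_posPart_le hΓ hβ hR hL hV hw hz h
    · rw [hsides]
      refine sSup_image_posPart_le hΓ hβ hR hL hV hw (fun x hx => ?_) (by linarith)
      rw [neg_sub_neg, abs_sub_comm]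
      exact hz x hx
  have hneg := hsides ▸ hpos
  refine csSup_le ((nonempty_closedBall.mpr hR).image _) ?_
  rintro _ ⟨x, hx, rfl⟩
  show |w x| ^ Γ * |z x| ^ β ≤ _
  rw [abs_rpow_eq_max_posPart_negPart hβ, mul_max_of_nonneg _ _ (by positivity)]
  exact max_le
    ((le_csSup (hbdd (g := fun t => max t 0) (by fun_prop)) ⟨x, hx, rfl⟩).trans hpos)
    ((le_csSup (hbdd (g := fun t => max (-t) 0) (by fun_prop)) ⟨x, hx, rfl⟩).trans hneg)

section Euclidean

variable {N : ℕ}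

local notation "𝔼" => EuclideanSpace ℝ (Fin N)

lemma bestLip_nonneg (f : 𝔼 → ℝ) (S : Set 𝔼) : 0 ≤ bestLip f S :=
  Real.sInf_nonneg fun _ hK => hK.1

lemma LipschitzOnWith.bestLip_le {f : 𝔼 → ℝ} {S : Set 𝔼} {K : NNReal}
    (hf : LipschitzOnWith K f S) : bestLip f S ≤ K :=
  csInf_le ⟨0, fun _ hk => hk.1⟩
    ⟨K.2, fun x hx y hy => by simpa [Real.dist_eq] using hf.dist_le_mul x hx y hy⟩

lemma IsLipschitzOnSet.continuousOn {f : 𝔼 → ℝ} {S : Set 𝔼} (hf : IsLipschitzOnSet f S) :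
    ContinuousOn f S :=
  hf.elim fun _ h => h.continuousOn

lemma IsLipschitzOnSet.abs_sub_le {f : 𝔼 → ℝ} {S : Set 𝔼} (hf : IsLipschitzOnSet f S)
    {x y : 𝔼} (hx : x ∈ S) (hy : y ∈ S) : |f x - f y| ≤ bestLip f S * dist x y := by
  obtain ⟨K, hK⟩ := hf
  rcases (dist_nonneg (x := x) (y := y)).eq_or_lt with hxy | hxy
  · simp [dist_le_zero.mp hxy.symm.le]
  · rw [← div_le_iff₀ hxy]
    refine le_csInf ⟨K, K.2, fun a ha b hb => ?_⟩ fun k hk => ?_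
    · simpa [Real.dist_eq] using hK.dist_le_mul a ha b hb
    · exact (div_le_iff₀ hxy).mpr (hk.2 x hx y hy)

lemma IsLipschitzOnSet.abs_le_of_eq_zero_on_sphere [NeZero N] {R : ℝ} {w : 𝔼 → ℝ}
    (hw : IsLipschitzOnSet w (closedBall 0 R)) (hw0 : ∀ y ∈ sphere (0 : 𝔼) R, w y = 0)
    {x : 𝔼} (hx : x ∈ closedBall 0 R) :
    |w x| ≤ bestLip w (closedBall 0 R) * (R - ‖x‖) := by
  obtain ⟨y, hy, hxy⟩ := exists_norm_eq_dist_eq_sub_norm (mem_closedBall_zero_iff.mp hx)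
  have := hw.abs_sub_le hx (mem_closedBall_zero_iff.mpr hy.le)
  rwa [hw0 y (mem_sphere_zero_iff_norm.mpr hy), sub_zero, hxy] at this

def lipQuotient (Γ Q : ℝ) (Ω : Set 𝔼) (wz : (𝔼 → ℝ) × (𝔼 → ℝ)) : ℝ :=
  max (bestLip wz.1 (closure Ω)) (bestLip wz.2 (closure Ω) ^ Q) /
    sSup ((fun x => |wz.1 x| ^ Γ * |wz.2 x| ^ ((1 - Γ) * Q)) '' closure Ω)

lemma inv_rpowProdMax_le_lipQuotient [NeZero N] {Γ Q R : ℝ} (hR : 0 < R)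
    (hΓ : Γ ∈ Ioo 0 1) (hQ : 0 < Q) {wz : (𝔼 → ℝ) × (𝔼 → ℝ)}
    (hwz : wz ∈ AdmClass Γ Q (ball (0 : 𝔼) R)) :
    (rpowProdMax Γ ((1 - Γ) * Q) R)⁻¹ ≤ lipQuotient Γ Q (ball 0 R) wz := by
  obtain ⟨w, z⟩ := wz
  obtain ⟨hwL, hzL, hw0, ⟨x₀, hx₀, hwz₀⟩, hsides⟩ := hwz
  obtain ⟨hΓ₀, hΓ₁⟩ := hΓ
  simp only [lipQuotient, closure_ball (0 : 𝔼) hR.ne'] at hwL hzL hx₀ hsides ⊢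
  rw [frontier_ball (0 : 𝔼) hR.ne'] at hw0
  set K := closedBall (0 : 𝔼) R
  set β := (1 - Γ) * Q
  set L := bestLip w K
  set V := bestLip z K
  set m := rpowProdMax Γ β R
  have hβ : 0 < β := mul_pos (by linarith) hQ
  have hL : 0 ≤ L := bestLip_nonneg w K
  have hV : 0 ≤ V := bestLip_nonneg z K
  have hm : 0 < m := rpowProdMax_pos hΓ₀ hβ hR
  have hM : sSup ((fun x => |w x| ^ Γ * |z x| ^ β) '' K) ≤ L ^ Γ * V ^ β * m :=
    sSup_image_abs_rpow_mul_abs_rpow_le hΓ₀ hβ hR.le hL hV hwL.continuousOn hzL.continuousOn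
      (fun x hx => hwL.abs_le_of_eq_zero_on_sphere hw0 hx)
      (fun x hx => by simpa using hzL.abs_sub_le hx (mem_closedBall_self hR.le)) hsides
  have hM₀ : 0 < sSup ((fun x => |w x| ^ Γ * |z x| ^ β) '' K) := by
    refine lt_of_lt_of_le ?_ (le_csSup (bddAbove_image_abs_rpow_mul_rpow
      (isCompact_closedBall 0 R) hwL.continuousOn hzL.continuousOn continuous_abs hΓ₀.le hβ.le)
      ⟨x₀, hx₀, rfl⟩)
    have := abs_pos.mpr (left_ne_zero_of_mul hwz₀)
    have := abs_pos.mpr (right_ne_zero_of_mul hwz₀)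
    positivity
  have hLV : L ^ Γ * V ^ β ≤ max L (V ^ Q) := by
    rw [show β = Q * (1 - Γ) by ring, Real.rpow_mul hV]
    exact rpow_mul_rpow_one_sub_le_max hL (by positivity) hΓ₀.le hΓ₁.le
  rw [inv_eq_one_div, div_le_div_iff₀ hm hM₀, one_mul]
  exact hM.trans (mul_le_mul_of_nonneg_right hLV hm.le)

lemma mem_admClass_ball {Γ Q R : ℝ} (hR : 0 < R) {e : 𝔼} (he : ‖e‖ = 1) :
    ((fun x => R - ‖x‖), (fun x => inner ℝ e x)) ∈ AdmClass Γ Q (ball (0 : 𝔼) R) := by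
  refine ⟨⟨1, (lipschitzWith_one_const_sub_norm R).lipschitzOnWith⟩,
    ⟨1, (lipschitzWith_one_inner_left he).lipschitzOnWith⟩, fun y hy => ?_,
    ⟨(R / 2) • e, ?_, ?_⟩, ?_⟩
  · rw [frontier_ball (0 : 𝔼) hR.ne', mem_sphere_zero_iff_norm] at hy
    simp [hy]
  · rw [closure_ball (0 : 𝔼) hR.ne', mem_closedBall_zero_iff, norm_smul, he, mul_one,
      Real.norm_of_nonneg (by positivity)]
    linarith
  · simp only [norm_smul, he, inner_smul_right, real_inner_self_eq_norm_sq]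
    rw [Real.norm_of_nonneg (by positivity)]
    norm_num
    constructor <;> linarith
  · rw [closure_ball (0 : 𝔼) hR.ne']
    exact sSup_image_posPart_eq_negPart (fun x => by simp) (fun x => inner_neg_right e x)

lemma lipQuotient_ball_le {Γ Q R : ℝ} (hR : 0 < R) (hΓ : Γ ∈ Ioo 0 1) (hQ : 0 < Q) {e : 𝔼}
    (he : ‖e‖ = 1) :
    lipQuotient Γ Q (ball 0 R) ((fun x => R - ‖x‖), (fun x => inner ℝ e x)) ≤
      (rpowProdMax Γ ((1 - Γ) * Q) R)⁻¹ := by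
  obtain ⟨hΓ₀, hΓ₁⟩ := hΓ
  set β := (1 - Γ) * Q
  have hβ : 0 < β := mul_pos (by linarith) hQ
  have hwL := lipschitzWith_one_const_sub_norm (E := 𝔼) R
  have hzL := lipschitzWith_one_inner_left he
  simp only [lipQuotient, closure_ball (0 : 𝔼) hR.ne']
  have hnum : max (bestLip (fun x => R - ‖x‖) (closedBall 0 R))
      (bestLip (fun x => inner ℝ e x) (closedBall 0 R) ^ Q) ≤ 1 :=
    max_le (by simpa using hwL.lipschitzOnWith.bestLip_le)
      (Real.rpow_le_one (bestLip_nonneg _ _) (by simpa using hzL.lipschitzOnWith.bestLip_le)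
        hQ.le)
  set c := β * R / (Γ + β)
  have hc : 0 < c := by positivity
  have hcR : R - c = Γ * R / (Γ + β) := by simp only [c]; field_simp; ring
  have hpK : c • e ∈ closedBall (0 : 𝔼) R := by
    rw [mem_closedBall_zero_iff, norm_smul, he, mul_one, Real.norm_of_nonneg hc.le]
    linarith [show 0 < Γ * R / (Γ + β) by positivity]
  have hden : rpowProdMax Γ β R ≤
      sSup ((fun x => |R - ‖x‖| ^ Γ * |inner ℝ e x| ^ β) '' closedBall 0 R) := by
    refine le_csSup_of_le (bddAbove_image_abs_rpow_mul_rpow (isCompact_closedBall 0 R)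
      hwL.continuous.continuousOn hzL.continuous.continuousOn continuous_abs hΓ₀.le hβ.le)
      ⟨c • e, hpK, rfl⟩ (le_of_eq ?_)
    simp only [norm_smul, he, inner_smul_right, real_inner_self_eq_norm_sq, rpowProdMax]
    rw [Real.norm_of_nonneg hc.le, mul_one, one_pow, mul_one, hcR, abs_of_pos (by positivity),
      abs_of_pos hc]
  rw [inv_eq_one_div]
  exact div_le_div₀ zero_le_one hnum (rpowProdMax_pos hΓ₀ hβ hR) hden

end Euclidean

/-- The limit eigenvalue on the ball `B_R ⊂ ℝ^N` is
`((Γ+Q(1-Γ))/(ΓR))^Γ ((Γ+Q(1-Γ))/(Q(1-Γ)R))^{(1-Γ)Q}`. -/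
theorem lambdaInfty_ball (N : ℕ) (hN : 1 ≤ N) (R Γ Q : ℝ) (hR : 0 < R)
    (hΓ : Γ ∈ Set.Ioo (0 : ℝ) 1) (hQ : 0 < Q) :
    LambdaInfty Γ Q (Metric.ball (0 : EuclideanSpace ℝ (Fin N)) R) =
      ((Γ + Q * (1 - Γ)) / (Γ * R)) ^ Γ *
        ((Γ + Q * (1 - Γ)) / (Q * (1 - Γ) * R)) ^ ((1 - Γ) * Q) := by
  have : NeZero N := ⟨by omega⟩
  rw [mul_comm Q (1 - Γ), ← inv_rpowProdMax hΓ.1.le (mul_pos (by linarith [hΓ.2]) hQ).le hR.le]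
  show sInf (lipQuotient Γ Q _ '' _) = _
  obtain ⟨e, he⟩ := exists_norm_eq (EuclideanSpace ℝ (Fin N)) zero_le_one
  refine IsLeast.csInf_eq ⟨⟨_, mem_admClass_ball hR he, ?_⟩, ?_⟩
  · exact le_antisymm (lipQuotient_ball_le hR hΓ hQ he)
      (inv_rpowProdMax_le_lipQuotient hR hΓ hQ (mem_admClass_ball hR he))
  · rintro _ ⟨wz, hwz, rfl⟩
    exact inv_rpowProdMax_le_lipQuotient hR hΓ hQ hwz
end
end

section
/- Let (X, μ) be a measure space with μ finite, and let g, h : X → ℝ be measurable functions that are essentially bounded with respect to μ. Let (p_n) and (q_n) be sequences of real numbers with p_n → ∞ and q_n/p_n → Q for some Q ∈ (0,∞). Then ((1/p_n) ∫_X |g|^{p_n} dμ + (1/q_n) ∫_X |h|^{q_n} dμ)^{1/p_n} → max{‖g‖_{L^∞(μ)}, ‖h‖_{L^∞(μ)}^Q} as n → ∞. -/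
/-!
Write `N_p(f) = ((1/p) ∫ |f|^p)^{1/p}`. Since `(1/p)^{1/p} → 1`, the Chebyshev bound
`a^p μ{a ≤ |f|} ≤ ∫ |f|^p ≤ ‖f‖_∞^p μ(X)` shows `N_p(f) → ‖f‖_∞` as `p → ∞`. The energy is
`x^p + y^p` with `x = N_p(g)` and `y = N_q(h)^{q/p} → ‖h‖_∞^Q`, and the `ℓ^p`-norm
`(x^p + y^p)^{1/p}` of a pair lies between `max x y` and `2^{1/p} max x y`.
-/

open Real Set Filter MeasureTheory Topology
open scoped ENNReal

lemma max_le_rpow_add_rpow_rpow_one_div {a b p : ℝ} (ha : 0 ≤ a) (hb : 0 ≤ b) (hp : 0 < p) :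
    max a b ≤ (a ^ p + b ^ p) ^ (1 / p) := by
  have hm : 0 ≤ max a b := le_max_of_le_left ha
  have hmp : max a b ^ p ≤ a ^ p + b ^ p := by
    rcases max_cases a b with ⟨h, -⟩ | ⟨h, -⟩ <;> rw [h] <;>
      linarith [rpow_nonneg ha p, rpow_nonneg hb p]
  calc max a b = (max a b ^ p) ^ (1 / p) := by
        rw [← rpow_mul hm, mul_one_div_cancel hp.ne', rpow_one]
    _ ≤ (a ^ p + b ^ p) ^ (1 / p) := rpow_le_rpow (rpow_nonneg hm _) hmp (by positivity)

lemma rpow_add_rpow_rpow_one_div_le {a b p : ℝ} (ha : 0 ≤ a) (hb : 0 ≤ b) (hp : 0 < p) :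
    (a ^ p + b ^ p) ^ (1 / p) ≤ 2 ^ (1 / p) * max a b := by
  have hm : 0 ≤ max a b := le_max_of_le_left ha
  have hsum : a ^ p + b ^ p ≤ 2 * max a b ^ p := by
    linarith [rpow_le_rpow ha (le_max_left a b) hp.le, rpow_le_rpow hb (le_max_right a b) hp.le]
  calc (a ^ p + b ^ p) ^ (1 / p) ≤ (2 * max a b ^ p) ^ (1 / p) :=
        rpow_le_rpow (by positivity) hsum (by positivity)
    _ = 2 ^ (1 / p) * max a b := by
        rw [mul_rpow zero_le_two (rpow_nonneg hm _), ← rpow_mul hm, mul_one_div_cancel hp.ne',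
          rpow_one]

section Asymptotics

variable {ι : Type*} {l : Filter ι} {p : ι → ℝ}

lemma tendsto_const_rpow_one_div_nhds_one {c : ℝ} (hc : 0 < c) (hp : Tendsto p l atTop) :
    Tendsto (fun i => c ^ (1 / p i)) l (𝓝 1) := by
  have h : Tendsto (fun i => 1 / p i) l (𝓝 0) :=
    hp.inv_tendsto_atTop.congr fun i => (one_div (p i)).symm
  simpa only [rpow_zero, Function.comp_def] using (continuousAt_const_rpow hc.ne').tendsto.comp h

lemma tendsto_one_div_rpow_one_div_nhds_one (hp : Tendsto p l atTop) :
    Tendsto (fun i => (1 / p i) ^ (1 / p i)) l (𝓝 1) := by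
  have h := ((tendsto_rpow_div.comp hp).inv₀ one_ne_zero)
  rw [inv_one] at h
  refine h.congr' ?_
  filter_upwards [hp.eventually_ge_atTop 0] with i hi
  rw [Function.comp_apply, div_rpow zero_le_one hi, one_rpow, one_div (_ ^ _)]

lemma tendsto_rpow_add_rpow_rpow_one_div_max {x y : ι → ℝ} {A C : ℝ} (hx : Tendsto x l (𝓝 A))
    (hy : Tendsto y l (𝓝 C)) (hx0 : ∀ᶠ i in l, 0 ≤ x i) (hy0 : ∀ᶠ i in l, 0 ≤ y i)
    (hp : Tendsto p l atTop) :
    Tendsto (fun i => (x i ^ p i + y i ^ p i) ^ (1 / p i)) l (𝓝 (max A C)) := by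
  have hmax := hx.max hy
  have hupper : Tendsto (fun i => 2 ^ (1 / p i) * max (x i) (y i)) l (𝓝 (max A C)) := by
    simpa only [one_mul] using (tendsto_const_rpow_one_div_nhds_one two_pos hp).mul hmax
  refine tendsto_of_tendsto_of_tendsto_of_le_of_le' hmax hupper ?_ ?_ <;>
    filter_upwards [hx0, hy0, hp.eventually_gt_atTop 0] with i hxi hyi hpi
  exacts [max_le_rpow_add_rpow_rpow_one_div hxi hyi hpi,
    rpow_add_rpow_rpow_one_div_le hxi hyi hpi]

end Asymptotics

section EssSup

variable {X : Type*} [MeasurableSpace X] {μ : Measure X} {f : X → ℝ}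

lemma integral_abs_rpow_nonneg (p : ℝ) : 0 ≤ ∫ x, |f x| ^ p ∂μ :=
  integral_nonneg fun _ => rpow_nonneg (abs_nonneg _) _

lemma measure_le_abs_pos_of_lt_lpNorm_top (hf : MemLp f ∞ μ) {a : ℝ} (ha : 0 ≤ a)
    (haf : a < lpNorm f ∞ μ) : 0 < μ {x | a ≤ |f x|} := by
  by_contra hpos
  have hae : ∀ᵐ x ∂μ, ‖f x‖ ≤ a := by
    filter_upwards [measure_eq_zero_iff_ae_notMem.1 (le_zero_iff.1 (not_lt.1 hpos))] with x hx
    simp only [not_le] at hx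
    exact (norm_eq_abs (f x)).trans_le hx.le
  have hle := eLpNormEssSup_le_of_ae_bound hae
  rw [← eLpNorm_exponent_top] at hle
  have : lpNorm f ∞ μ ≤ a := by
    rw [← toReal_eLpNorm hf.1]
    exact ENNReal.toReal_le_of_le_ofReal ha hle
  linarith

variable [IsFiniteMeasure μ]

lemma integral_abs_rpow_le (hf : MemLp f ∞ μ) {p : ℝ} (hp : 0 ≤ p) :
    ∫ x, |f x| ^ p ∂μ ≤ lpNorm f ∞ μ ^ p * μ.real univ := by
  refine (le_norm_self _).trans (norm_integral_le_of_norm_le_const ?_)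
  filter_upwards [ae_le_lpNorm_exponent_top hf] with x hx
  rw [norm_eq_abs, abs_of_nonneg (rpow_nonneg (abs_nonneg _) _)]
  exact rpow_le_rpow (abs_nonneg _) ((norm_eq_abs (f x)).symm.trans_le hx) hp

lemma rpow_mul_measureReal_le_integral_abs_rpow (hf : MemLp f ∞ μ) {a p : ℝ} (ha : 0 ≤ a)
    (hp : 0 < p) : a ^ p * μ.real {x | a ≤ |f x|} ≤ ∫ x, |f x| ^ p ∂μ := by
  have hint : Integrable (fun x => |f x| ^ p) μ := by
    simpa [ENNReal.toReal_ofReal hp.le] using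
      (hf.mono_exponent (le_top : ENNReal.ofReal p ≤ ∞)).integrable_norm_rpow'
  have hset : {x | a ≤ |f x|} = {x | a ^ p ≤ |f x| ^ p} := by
    ext x
    simp only [mem_ofPred_eq, rpow_le_rpow_iff ha (abs_nonneg _) hp]
  rw [hset]
  exact mul_meas_ge_le_integral_of_nonneg (ae_of_all _ fun x => rpow_nonneg (abs_nonneg _) _)
    hint _

variable {ι : Type*} {l : Filter ι} {p : ι → ℝ}

lemma eventually_lt_integral_abs_rpow_rpow_one_div (hf : MemLp f ∞ μ) (hp : Tendsto p l atTop)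
    {b : ℝ} (hb : b < lpNorm f ∞ μ) : ∀ᶠ i in l, b < (∫ x, |f x| ^ p i ∂μ) ^ (1 / p i) := by
  rcases lt_or_ge b 0 with hb0 | hb0
  · exact Eventually.of_forall fun i => hb0.trans_le (rpow_nonneg (integral_abs_rpow_nonneg _) _)
  obtain ⟨a, hba, haf⟩ := exists_between hb
  have ha0 : 0 ≤ a := hb0.trans hba.le
  set m := μ.real {x | a ≤ |f x|}
  have hm : 0 < m :=
    ENNReal.toReal_pos (measure_le_abs_pos_of_lt_lpNorm_top hf ha0 haf).ne' (measure_ne_top _ _)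
  have hlim : Tendsto (fun i => a * m ^ (1 / p i)) l (𝓝 a) := by
    simpa only [mul_one] using (tendsto_const_rpow_one_div_nhds_one hm hp).const_mul a
  filter_upwards [hlim.eventually (lt_mem_nhds hba), hp.eventually_gt_atTop 0] with i hi hpi
  calc b < a * m ^ (1 / p i) := hi
    _ = (a ^ p i * m) ^ (1 / p i) := by
        rw [mul_rpow (rpow_nonneg ha0 _) hm.le, ← rpow_mul ha0, mul_one_div_cancel hpi.ne',
          rpow_one]
    _ ≤ (∫ x, |f x| ^ p i ∂μ) ^ (1 / p i) :=
        rpow_le_rpow (by positivity) (rpow_mul_measureReal_le_integral_abs_rpow hf ha0 hpi)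
          (by positivity)

lemma eventually_integral_abs_rpow_rpow_one_div_lt (hf : MemLp f ∞ μ) (hp : Tendsto p l atTop)
    {b : ℝ} (hb : lpNorm f ∞ μ < b) : ∀ᶠ i in l, (∫ x, |f x| ^ p i ∂μ) ^ (1 / p i) < b := by
  have hA : 0 ≤ lpNorm f ∞ μ := lpNorm_nonneg
  have hbound : ∀ i, 0 < p i →
      (∫ x, |f x| ^ p i ∂μ) ^ (1 / p i) ≤ lpNorm f ∞ μ * μ.real univ ^ (1 / p i) := by
    intro i hpi
    calc (∫ x, |f x| ^ p i ∂μ) ^ (1 / p i)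
        ≤ (lpNorm f ∞ μ ^ p i * μ.real univ) ^ (1 / p i) :=
          rpow_le_rpow (integral_abs_rpow_nonneg _) (integral_abs_rpow_le hf hpi.le)
            (by positivity)
      _ = lpNorm f ∞ μ * μ.real univ ^ (1 / p i) := by
          rw [mul_rpow (rpow_nonneg hA _) measureReal_nonneg, ← rpow_mul hA,
            mul_one_div_cancel hpi.ne', rpow_one]
  rcases (measureReal_nonneg : 0 ≤ μ.real univ).eq_or_lt with hc | hc
  · filter_upwards [hp.eventually_gt_atTop 0] with i hpi
    refine (hbound i hpi).trans_lt ?_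
    rw [← hc, zero_rpow (one_div_pos.2 hpi).ne', mul_zero]
    exact hA.trans_lt hb
  · have hlim : Tendsto (fun i => lpNorm f ∞ μ * μ.real univ ^ (1 / p i)) l
        (𝓝 (lpNorm f ∞ μ)) := by
      simpa only [mul_one] using (tendsto_const_rpow_one_div_nhds_one hc hp).const_mul _
    filter_upwards [hlim.eventually (gt_mem_nhds hb), hp.eventually_gt_atTop 0] with i hi hpi
    exact (hbound i hpi).trans_lt hi

theorem tendsto_integral_abs_rpow_rpow_one_div (hf : MemLp f ∞ μ) (hp : Tendsto p l atTop) :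
    Tendsto (fun i => (∫ x, |f x| ^ p i ∂μ) ^ (1 / p i)) l (𝓝 (lpNorm f ∞ μ)) :=
  tendsto_order.2 ⟨fun _ hb => eventually_lt_integral_abs_rpow_rpow_one_div hf hp hb,
    fun _ hb => eventually_integral_abs_rpow_rpow_one_div_lt hf hp hb⟩

theorem tendsto_one_div_mul_integral_abs_rpow_rpow_one_div (hf : MemLp f ∞ μ)
    (hp : Tendsto p l atTop) :
    Tendsto (fun i => ((1 / p i) * ∫ x, |f x| ^ p i ∂μ) ^ (1 / p i)) l (𝓝 (lpNorm f ∞ μ)) := by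
  have h := (tendsto_one_div_rpow_one_div_nhds_one hp).mul
    (tendsto_integral_abs_rpow_rpow_one_div hf hp)
  rw [one_mul] at h
  refine h.congr' ?_
  filter_upwards [hp.eventually_ge_atTop 0] with i hpi
  rw [mul_rpow (by positivity) (integral_abs_rpow_nonneg _)]

end EssSup

theorem limit_energy_to_max_sup_general {X : Type*} [MeasurableSpace X]
    (μ : Measure X) [IsFiniteMeasure μ]
    (g h : X → ℝ)
    (hgb : MemLp g ⊤ μ) (hhb : MemLp h ⊤ μ)
    (p q : ℕ → ℝ) (Q : ℝ) (hQ : 0 < Q)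
    (hp : Tendsto p atTop atTop)
    (hq : Tendsto (fun n => q n / p n) atTop (nhds Q)) :
    Tendsto
      (fun n => ((1 / p n) * ∫ x, |g x| ^ p n ∂μ +
        (1 / q n) * ∫ x, |h x| ^ q n ∂μ) ^ (1 / p n))
      atTop
      (nhds (max ((eLpNorm g ⊤ μ).toReal) (((eLpNorm h ⊤ μ).toReal) ^ Q))) := by
  have hq' : Tendsto q atTop atTop := by
    refine (hq.pos_mul_atTop hQ hp).congr' ?_
    filter_upwards [hp.eventually_ne_atTop 0] with n hn
    field_simp
  have hG : ∀ᶠ n in atTop, 0 ≤ (1 / p n) * ∫ x, |g x| ^ p n ∂μ :=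
    (hp.eventually_ge_atTop 0).mono fun n hpn =>
      mul_nonneg (one_div_nonneg.2 hpn) (integral_abs_rpow_nonneg _)
  have hH : ∀ᶠ n in atTop, 0 ≤ (1 / q n) * ∫ x, |h x| ^ q n ∂μ :=
    (hq'.eventually_ge_atTop 0).mono fun n hqn =>
      mul_nonneg (one_div_nonneg.2 hqn) (integral_abs_rpow_nonneg _)
  rw [toReal_eLpNorm hgb.1, toReal_eLpNorm hhb.1]
  refine (tendsto_rpow_add_rpow_rpow_one_div_max
    (tendsto_one_div_mul_integral_abs_rpow_rpow_one_div hgb hp)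
    ((tendsto_one_div_mul_integral_abs_rpow_rpow_one_div hhb hq').rpow hq (Or.inr hQ))
    (hG.mono fun n hn => rpow_nonneg hn _)
    (hH.mono fun n hn => rpow_nonneg (rpow_nonneg hn _) _) hp).congr' ?_
  filter_upwards [hG, hH, hp.eventually_gt_atTop 0, hq'.eventually_gt_atTop 0]
    with n hGn hHn hpn hqn
  rw [← rpow_mul hGn, ← rpow_mul (rpow_nonneg hHn _), ← rpow_mul hHn,
    div_mul_cancel₀ (q n) hpn.ne', one_div_mul_cancel hpn.ne', one_div_mul_cancel hqn.ne', rpow_one,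
    rpow_one]

/-- For essentially bounded `g, h` on a finite measure space and `p_n → ∞`,
`q_n / p_n → Q ∈ (0,∞)`, one has
`((1/p_n) ∫ |g|^{p_n} + (1/q_n) ∫ |h|^{q_n})^{1/p_n} → max{‖g‖_∞, ‖h‖_∞^Q}`. -/
theorem limit_energy_to_max_sup {X : Type*} [MeasurableSpace X]
    (μ : Measure X) [IsFiniteMeasure μ]
    (g h : X → ℝ) (hg : Measurable g) (hh : Measurable h)
    (hgb : MemLp g ⊤ μ) (hhb : MemLp h ⊤ μ)
    (p q : ℕ → ℝ) (Q : ℝ) (hQ : 0 < Q)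
    (hp : Tendsto p atTop atTop)
    (hq : Tendsto (fun n => q n / p n) atTop (nhds Q)) :
    Tendsto
      (fun n => ((1 / p n) * ∫ x, |g x| ^ p n ∂μ +
        (1 / q n) * ∫ x, |h x| ^ q n ∂μ) ^ (1 / p n))
      atTop
      (nhds (max ((eLpNorm g ⊤ μ).toReal) (((eLpNorm h ⊤ μ).toReal) ^ Q))) :=
  limit_energy_to_max_sup_general μ g h hgb hhb p q Q hQ hp hq
end

section
/- Let Ω ⊂ ℝ^N be a nonempty bounded open set with closure cl(Ω). Let g_n, g : cl(Ω) → ℝ be continuous functions with g_n ≥ 0, such that g_n → g uniformly on cl(Ω), and let (p_n) be a sequence of real numbers with p_n → ∞. If ∫_Ω g_n(x)^{p_n} dx = 1 for every n, then max_{cl(Ω)} g = 1. -/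
open Real Set Filter MeasureTheory Topology

/-!
Let `M = G x₀` be the maximum of `G` on the compact set `cl Ω`. If `M < c < 1`, uniform
convergence gives `g_n ≤ c` on `Ω` for large `n`, so `∫_Ω g_n^{p_n} ≤ c^{p_n} |Ω| → 0`. If
`1 < c < M`, continuity of `G` at `x₀ ∈ cl Ω` gives a nonempty open `W ⊆ Ω` on which eventually
`g_n ≥ c`, so `∫_Ω g_n^{p_n} ≥ c^{p_n} |W| → ∞`. Both contradict the normalization.
-/

lemma TendstoUniformlyOn.eventually_forall_gt {α ι β : Type*} [UniformSpace β] [AddCommGroup β]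
    [IsUniformAddGroup β] [PartialOrder β] [IsOrderedAddMonoid β] [OrderTopology β]
    {f : ι → α → β} {g : α → β} {K : Set α} {p : Filter ι} {u v : β} (huv : u < v)
    (hf : TendstoUniformlyOn f g p K) (hg : ∀ x ∈ K, v ≤ g x) :
    ∀ᶠ i in p, ∀ x ∈ K, u < f i x := by
  have hneg := (uniformContinuous_neg.comp_tendstoUniformlyOn hf).eventually_forall_lt
    (neg_lt_neg huv) fun x hx => neg_le_neg (hg x hx)
  filter_upwards [hneg] with i hi x hx using neg_lt_neg_iff.mp (hi x hx)

section RpowIntegral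

variable {α : Type*} [MeasurableSpace α] {μ : Measure α} {s : Set α} {ι : Type*} {l : Filter ι}
  {f : ι → α → ℝ} {p : ι → ℝ} {c : ℝ}

theorem tendsto_setIntegral_rpow_nhds_zero (hs : μ s < ⊤) (hp : Tendsto p l atTop)
    (hc₀ : 0 ≤ c) (hc₁ : c < 1) (hf₀ : ∀ i, ∀ x ∈ s, 0 ≤ f i x)
    (hf : ∀ᶠ i in l, ∀ x ∈ s, f i x ≤ c) :
    Tendsto (fun i => ∫ x in s, f i x ^ p i ∂μ) l (𝓝 0) := by
  have hpow : Tendsto (fun i => c ^ p i * μ.real s) l (𝓝 0) := by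
    simpa using ((tendsto_rpow_atTop_of_base_lt_one c (by linarith) hc₁).comp hp).mul_const
      (μ.real s)
  refine squeeze_zero_norm' ?_ hpow
  filter_upwards [hf, hp.eventually_ge_atTop 0] with i hfc hpi
  refine norm_setIntegral_le_of_norm_le_const hs fun x hx => ?_
  rw [Real.norm_of_nonneg (rpow_nonneg (hf₀ i x hx) _)]
  exact rpow_le_rpow (hf₀ i x hx) (hfc x hx) hpi

theorem tendsto_setIntegral_rpow_atTop (hs : MeasurableSet s) (hμ₀ : μ s ≠ 0) (hμ : μ s ≠ ⊤)
    (hp : Tendsto p l atTop) (hc : 1 < c) (hf : ∀ᶠ i in l, ∀ x ∈ s, c ≤ f i x)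
    (hint : ∀ᶠ i in l, IntegrableOn (fun x => f i x ^ p i) s μ) :
    Tendsto (fun i => ∫ x in s, f i x ^ p i ∂μ) l atTop := by
  have hpow : Tendsto (fun i => c ^ p i * μ.real s) l atTop :=
    ((tendsto_rpow_atTop_of_base_gt_one c hc).comp hp).atTop_mul_const
      (ENNReal.toReal_pos hμ₀ hμ)
  refine tendsto_atTop_mono' l ?_ hpow
  filter_upwards [hf, hint, hp.eventually_ge_atTop 0] with i hfc hfi hpi
  exact setIntegral_ge_of_const_le_real hs hμ
    (fun x hx => rpow_le_rpow (by linarith) (hfc x hx) hpi) hfi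

end RpowIntegral

theorem exists_isOpen_subset_forall_lt_of_mem_closure {X : Type*} [TopologicalSpace X]
    {Ω : Set X} {G : X → ℝ} {x₀ : X} {c : ℝ} (ho : IsOpen Ω) (hGc : ContinuousOn G (closure Ω))
    (hx₀ : x₀ ∈ closure Ω) (hc : c < G x₀) :
    ∃ W, IsOpen W ∧ W.Nonempty ∧ W ⊆ Ω ∧ ∀ x ∈ W, c < G x := by
  obtain ⟨U, hUo, hx₀U, hU⟩ := mem_nhdsWithin.mp ((hGc x₀ hx₀).eventually (eventually_gt_nhds hc))
  exact ⟨U ∩ Ω, hUo.inter ho, mem_closure_iff.mp hx₀ U hUo hx₀U, inter_subset_right,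
    fun x hx => hU ⟨hx.1, subset_closure hx.2⟩⟩

/-- If nonnegative continuous `g_n` converge uniformly on `cl Ω` to `g`, `p_n → ∞`, and
`∫_Ω g_n^{p_n} = 1` for all `n`, then `max_{cl Ω} g = 1`. -/
theorem sup_limit_of_normalization (N : ℕ) (Ω : Set (EuclideanSpace ℝ (Fin N)))
    (hne : Ω.Nonempty) (hb : Bornology.IsBounded Ω) (ho : IsOpen Ω)
    (g : ℕ → EuclideanSpace ℝ (Fin N) → ℝ) (G : EuclideanSpace ℝ (Fin N) → ℝ)
    (hgc : ∀ n, ContinuousOn (g n) (closure Ω))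
    (hGc : ContinuousOn G (closure Ω))
    (hgnn : ∀ n, ∀ x ∈ closure Ω, 0 ≤ g n x)
    (hunif : TendstoUniformlyOn g G atTop (closure Ω))
    (p : ℕ → ℝ) (hp : Tendsto p atTop atTop)
    (hnorm : ∀ n, ∫ x in Ω, g n x ^ p n = 1) :
    sSup (G '' closure Ω) = 1 := by
  have hK : IsCompact (closure Ω) := hb.isCompact_closure
  obtain ⟨x₀, hx₀, hsup, hmax⟩ := hK.exists_sSup_image_eq_and_ge hne.closure hGc
  rw [hsup]
  have hΩ : volume Ω < ⊤ := hb.measure_lt_top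
  have hint : ∀ᶠ n in atTop, IntegrableOn (fun x => g n x ^ p n) Ω := by
    filter_upwards [hp.eventually_ge_atTop 0] with n hpn
    exact (((hgc n).rpow_const fun _ _ => Or.inr hpn).integrableOn_compact hK).mono_set
      subset_closure
  have hone : Tendsto (fun n => ∫ x in Ω, g n x ^ p n) atTop (𝓝 1) := by simp [hnorm]
  refine le_antisymm (not_lt.mp fun hgt => ?_) (not_lt.mp fun hlt => ?_)
  · obtain ⟨c, hc₁, hcG⟩ := exists_between hgt
    obtain ⟨c', hcc', hc'G⟩ := exists_between hcG
    obtain ⟨W, hWo, hWne, hWΩ, hW⟩ := exists_isOpen_subset_forall_lt_of_mem_closure ho hGc hx₀ hc'G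
    have hWK : W ⊆ closure Ω := hWΩ.trans subset_closure
    have hinfty := tendsto_setIntegral_rpow_atTop hWo.measurableSet (hWo.measure_ne_zero _ hWne)
      (measure_mono hWΩ |>.trans_lt hΩ).ne hp hc₁
      (((hunif.mono hWK).eventually_forall_gt hcc' fun x hx => (hW x hx).le).mono
        fun n hn x hx => (hn x hx).le)
      (hint.mono fun n hn => hn.mono_set hWΩ)
    refine not_tendsto_atTop_of_tendsto_nhds hone (tendsto_atTop_mono' _ ?_ hinfty)
    filter_upwards [hint] with n hn
    refine setIntegral_mono_set hn (ae_restrict_of_forall_mem ho.measurableSet fun x hx => ?_)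
      hWΩ.eventuallyLE
    exact rpow_nonneg (hgnn n x (subset_closure hx)) _
  · obtain ⟨c, hGxc, hc₁⟩ := exists_between hlt
    have hG₀ : 0 ≤ G x₀ := ge_of_tendsto' (hunif.tendsto_at hx₀) fun n => hgnn n x₀ hx₀
    have hzero := tendsto_setIntegral_rpow_nhds_zero hΩ hp (hG₀.trans hGxc.le) hc₁
      (fun n x hx => hgnn n x (subset_closure hx))
      ((hunif.mono subset_closure).eventually_forall_le hGxc fun x hx => hmax x (subset_closure hx))
    exact zero_ne_one (tendsto_nhds_unique hzero hone)
end

section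
/- Let Ω ⊂ ℝ^N be a nonempty bounded open set with closure cl(Ω). Let g_n, h_n, g, h : cl(Ω) → ℝ be continuous functions with g_n ≥ 0 and h_n ≥ 0, such that g_n → g and h_n → h uniformly on cl(Ω), and let (p_n) be a sequence of real numbers with p_n → ∞. If ∫_Ω g_n(x)^{p_n} dx = ∫_Ω h_n(x)^{p_n} dx for every n, then max_{cl(Ω)} g = max_{cl(Ω)} h. -/
open Real Set Filter Topology MeasureTheory
open scoped ENNReal

/-!
The `p`-th root of `∫_Ω f ^ p` tends to `max_{cl Ω} F` when `f → F` uniformly and `p → ∞`.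
If `c < max F < b`, then eventually `f < b` on `Ω`, and `f > c` on some nonempty open `V ⊆ Ω`
(continuity of `F` near a maximum point), so `|V| c ^ p ≤ ∫_Ω f ^ p ≤ |Ω| b ^ p`; the `p`-th
roots of `|V|` and `|Ω|` tend to `1`. Equal integrals therefore have equal limits.
-/

lemma tendsto_const_rpow_inv {ι : Type*} {l : Filter ι} {p : ι → ℝ} {c : ℝ} (hc : 0 < c)
    (hp : Tendsto p l atTop) : Tendsto (fun i => c ^ (p i)⁻¹) l (𝓝 1) := by
  simpa [Function.comp_def] using
    (continuousAt_const_rpow hc.ne').tendsto.comp (tendsto_inv_atTop_zero.comp hp)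

lemma mul_rpow_rpow_inv {c t p : ℝ} (hc : 0 ≤ c) (ht : 0 ≤ t) (hp : p ≠ 0) :
    (c * t ^ p) ^ p⁻¹ = c ^ p⁻¹ * t := by
  rw [mul_rpow hc (rpow_nonneg ht p), rpow_rpow_inv ht hp]

lemma exists_isOpen_subset_lt_of_lt_sSup {X : Type*} [TopologicalSpace X] {Ω : Set X}
    {F : X → ℝ} {c : ℝ} (ho : IsOpen Ω) (hne : Ω.Nonempty)
    (hFc : ContinuousOn F (closure Ω)) (hc : c < sSup (F '' closure Ω)) :
    ∃ V, IsOpen V ∧ V.Nonempty ∧ V ⊆ Ω ∧ ∀ x ∈ V, c < F x := by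
  obtain ⟨_, ⟨x₀, hx₀, rfl⟩, hcx₀⟩ := exists_lt_of_lt_csSup (hne.closure.image F) hc
  obtain ⟨u, hu, hx₀u, hcu⟩ :=
    mem_nhdsWithin.1 ((hFc x₀ hx₀).eventually (eventually_gt_nhds hcx₀))
  exact ⟨u ∩ Ω, hu.inter ho, mem_closure_iff.1 hx₀ u hu hx₀u, inter_subset_right,
    fun x hx => hcu ⟨hx.1, subset_closure hx.2⟩⟩

section

variable {X ι : Type*} [MeasurableSpace X] {μ : Measure X} {l : Filter ι}
  {s : Set X} {f : ι → X → ℝ} {p : ι → ℝ}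

lemma eventually_rpow_inv_setIntegral_rpow_lt {b c : ℝ} (hs : MeasurableSet s)
    (hμs : 0 < μ.real s) (hp : Tendsto p l atTop) (hc : 0 ≤ c) (hcb : c < b)
    (hf : ∀ᶠ i in l, ∀ x ∈ s, 0 ≤ f i x ∧ f i x ≤ c) :
    ∀ᶠ i in l, (∫ x in s, f i x ^ p i ∂μ) ^ (p i)⁻¹ < b := by
  have hlim : Tendsto (fun i => μ.real s ^ (p i)⁻¹ * c) l (𝓝 c) := by
    simpa using (tendsto_const_rpow_inv hμs hp).mul_const c
  have hμs_fin : μ s < ∞ := (ENNReal.toReal_pos_iff.1 hμs).2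
  filter_upwards [hlim.eventually (gt_mem_nhds hcb), hf, hp.eventually_gt_atTop 0]
    with i hlt hfi hpi
  have hint_le : ∫ x in s, f i x ^ p i ∂μ ≤ μ.real s * c ^ p i := by
    rw [mul_comm]
    refine (Real.le_norm_self _).trans
      (norm_setIntegral_le_of_norm_le_const hμs_fin fun x hx => ?_)
    rw [Real.norm_eq_abs, abs_of_nonneg (rpow_nonneg (hfi x hx).1 _)]
    exact rpow_le_rpow (hfi x hx).1 (hfi x hx).2 hpi.le
  have hint_nonneg : 0 ≤ ∫ x in s, f i x ^ p i ∂μ :=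
    setIntegral_nonneg hs fun x hx => rpow_nonneg (hfi x hx).1 _
  calc (∫ x in s, f i x ^ p i ∂μ) ^ (p i)⁻¹ ≤ (μ.real s * c ^ p i) ^ (p i)⁻¹ :=
        rpow_le_rpow hint_nonneg hint_le (inv_nonneg.2 hpi.le)
    _ = μ.real s ^ (p i)⁻¹ * c := mul_rpow_rpow_inv measureReal_nonneg hc hpi.ne'
    _ < b := hlt

lemma eventually_lt_rpow_inv_setIntegral_rpow {t : Set X} {a c : ℝ} (hs : MeasurableSet s)
    (ht : MeasurableSet t) (hts : t ⊆ s) (hμt : 0 < μ.real t) (hp : Tendsto p l atTop)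
    (ha : 0 ≤ a) (hac : a < c) (hf0 : ∀ i, ∀ x ∈ s, 0 ≤ f i x)
    (hint : ∀ᶠ i in l, IntegrableOn (fun x => f i x ^ p i) s μ)
    (hf : ∀ᶠ i in l, ∀ x ∈ t, c ≤ f i x) :
    ∀ᶠ i in l, a < (∫ x in s, f i x ^ p i ∂μ) ^ (p i)⁻¹ := by
  have hlim : Tendsto (fun i => μ.real t ^ (p i)⁻¹ * c) l (𝓝 c) := by
    simpa using (tendsto_const_rpow_inv hμt hp).mul_const c
  have hμt_fin : μ t ≠ ∞ := (ENNReal.toReal_pos_iff.1 hμt).2.ne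
  filter_upwards [hlim.eventually (lt_mem_nhds hac), hint, hf, hp.eventually_gt_atTop 0]
    with i hlt hinti hfi hpi
  have hc : 0 ≤ c := ha.trans hac.le
  have hle_int : μ.real t * c ^ p i ≤ ∫ x in s, f i x ^ p i ∂μ := by
    calc μ.real t * c ^ p i ≤ ∫ x in t, f i x ^ p i ∂μ := by
          rw [mul_comm]
          exact setIntegral_ge_of_const_le_real ht hμt_fin
            (fun x hx => rpow_le_rpow hc (hfi x hx) hpi.le) (hinti.mono_set hts)
      _ ≤ ∫ x in s, f i x ^ p i ∂μ :=
          setIntegral_mono_set hinti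
            (ae_restrict_of_forall_mem hs fun x hx => rpow_nonneg (hf0 i x hx) _)
            hts.eventuallyLE
  calc a < μ.real t ^ (p i)⁻¹ * c := hlt
    _ = (μ.real t * c ^ p i) ^ (p i)⁻¹ := (mul_rpow_rpow_inv measureReal_nonneg hc hpi.ne').symm
    _ ≤ (∫ x in s, f i x ^ p i ∂μ) ^ (p i)⁻¹ :=
        rpow_le_rpow (by positivity) hle_int (inv_nonneg.2 hpi.le)

end

lemma measureReal_pos_of_isOpen_of_subset_isCompact {X : Type*} [TopologicalSpace X]
    [MeasurableSpace X] {μ : Measure X} [IsFiniteMeasureOnCompacts μ] [μ.IsOpenPosMeasure]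
    {V K : Set X} (hV : IsOpen V) (hne : V.Nonempty) (hK : IsCompact K) (hVK : V ⊆ K) :
    0 < μ.real V :=
  ENNReal.toReal_pos (hV.measure_ne_zero μ hne)
    ((measure_mono hVK).trans_lt hK.measure_lt_top).ne

section

variable {X ι : Type*} [TopologicalSpace X] [MeasurableSpace X] [OpensMeasurableSpace X]
  {μ : Measure X} [IsFiniteMeasureOnCompacts μ] [μ.IsOpenPosMeasure] {l : Filter ι}
  {Ω : Set X} {f : ι → X → ℝ} {F : X → ℝ} {p : ι → ℝ}

lemma eventually_rpow_inv_setIntegral_rpow_lt_of_sSup_lt [l.NeBot] {b : ℝ} (ho : IsOpen Ω)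
    (hne : Ω.Nonempty) (hK : IsCompact (closure Ω)) (hFc : ContinuousOn F (closure Ω))
    (hf0 : ∀ i, ∀ x ∈ closure Ω, 0 ≤ f i x) (hfF : TendstoUniformlyOn f F l (closure Ω))
    (hp : Tendsto p l atTop) (hb : sSup (F '' closure Ω) < b) :
    ∀ᶠ i in l, (∫ x in Ω, f i x ^ p i ∂μ) ^ (p i)⁻¹ < b := by
  obtain ⟨c, hMc, hcb⟩ := exists_between hb
  have hFM : ∀ x ∈ closure Ω, F x ≤ sSup (F '' closure Ω) := fun x hx =>
    le_csSup (hK.image_of_continuousOn hFc).bddAbove (mem_image_of_mem F hx)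
  have hM0 : 0 ≤ sSup (F '' closure Ω) := by
    obtain ⟨x, hx⟩ := hne.closure
    exact (ge_of_tendsto' (hfF.tendsto_at hx) fun i => hf0 i x hx).trans (hFM x hx)
  have hfΩ : ∀ᶠ i in l, ∀ x ∈ Ω, 0 ≤ f i x ∧ f i x ≤ c := by
    filter_upwards [hfF.eventually_forall_le hMc hFM] with i hi x hx
    exact ⟨hf0 i x (subset_closure hx), hi x (subset_closure hx)⟩
  exact eventually_rpow_inv_setIntegral_rpow_lt ho.measurableSet
    (measureReal_pos_of_isOpen_of_subset_isCompact ho hne hK subset_closure) hp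
    (hM0.trans hMc.le) hcb hfΩ

lemma eventually_lt_rpow_inv_setIntegral_rpow_of_lt_sSup {a : ℝ} (ho : IsOpen Ω)
    (hne : Ω.Nonempty) (hK : IsCompact (closure Ω)) (hFc : ContinuousOn F (closure Ω))
    (hfc : ∀ i, ContinuousOn (f i) (closure Ω)) (hf0 : ∀ i, ∀ x ∈ closure Ω, 0 ≤ f i x)
    (hfF : TendstoUniformlyOn f F l (closure Ω)) (hp : Tendsto p l atTop) (ha0 : 0 ≤ a)
    (ha : a < sSup (F '' closure Ω)) :
    ∀ᶠ i in l, a < (∫ x in Ω, f i x ^ p i ∂μ) ^ (p i)⁻¹ := by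
  obtain ⟨c, hac, hcM⟩ := exists_between ha
  obtain ⟨c', hcc', hc'M⟩ := exists_between hcM
  obtain ⟨V, hVo, hVne, hVΩ, hc'V⟩ := exists_isOpen_subset_lt_of_lt_sSup ho hne hFc hc'M
  have hfV : ∀ᶠ i in l, ∀ x ∈ V, c ≤ f i x := by
    filter_upwards [((hfF.mono (hVΩ.trans subset_closure)).fun_neg).eventually_forall_le
      (neg_lt_neg hcc') fun x hx => neg_le_neg (hc'V x hx).le] with i hi x hx
    exact neg_le_neg_iff.1 (hi x hx)
  have hint : ∀ᶠ i in l, IntegrableOn (fun x => f i x ^ p i) Ω μ := by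
    filter_upwards [hp.eventually_ge_atTop 0] with i hi
    exact ((hfc i).rpow_const fun _ _ => Or.inr hi).integrableOn_of_subset_isCompact hK
      ho.measurableSet subset_closure
      (measure_ne_top_of_subset subset_closure hK.measure_lt_top.ne)
  exact eventually_lt_rpow_inv_setIntegral_rpow ho.measurableSet hVo.measurableSet hVΩ
    (measureReal_pos_of_isOpen_of_subset_isCompact hVo hVne hK (hVΩ.trans subset_closure))
    hp ha0 hac (fun i x hx => hf0 i x (subset_closure hx)) hint hfV

variable (μ) in
theorem tendsto_rpow_inv_setIntegral_rpow_sSup [l.NeBot] (ho : IsOpen Ω) (hne : Ω.Nonempty)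
    (hK : IsCompact (closure Ω)) (hfc : ∀ i, ContinuousOn (f i) (closure Ω))
    (hf0 : ∀ i, ∀ x ∈ closure Ω, 0 ≤ f i x) (hfF : TendstoUniformlyOn f F l (closure Ω))
    (hp : Tendsto p l atTop) :
    Tendsto (fun i => (∫ x in Ω, f i x ^ p i ∂μ) ^ (p i)⁻¹) l (𝓝 (sSup (F '' closure Ω))) := by
  have hFc : ContinuousOn F (closure Ω) := hfF.continuousOn (Eventually.of_forall hfc).frequently
  refine tendsto_order.2 ⟨fun a ha => ?_, fun b hb =>
    eventually_rpow_inv_setIntegral_rpow_lt_of_sSup_lt ho hne hK hFc hf0 hfF hp hb⟩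
  rcases lt_or_ge a 0 with ha0 | ha0
  · exact Eventually.of_forall fun i => ha0.trans_le (rpow_nonneg (setIntegral_nonneg
      ho.measurableSet fun x hx => rpow_nonneg (hf0 i x (subset_closure hx)) _) _)
  · exact eventually_lt_rpow_inv_setIntegral_rpow_of_lt_sSup ho hne hK hFc hfc hf0 hfF hp
      ha0 ha

end

theorem sup_limit_of_equal_integrals_general (N : ℕ) (Ω : Set (EuclideanSpace ℝ (Fin N)))
    (hne : Ω.Nonempty) (hb : Bornology.IsBounded Ω) (ho : IsOpen Ω)
    (g h : ℕ → EuclideanSpace ℝ (Fin N) → ℝ)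
    (G H : EuclideanSpace ℝ (Fin N) → ℝ)
    (hgc : ∀ n, ContinuousOn (g n) (closure Ω))
    (hhc : ∀ n, ContinuousOn (h n) (closure Ω))
    (hgnn : ∀ n, ∀ x ∈ closure Ω, 0 ≤ g n x)
    (hhnn : ∀ n, ∀ x ∈ closure Ω, 0 ≤ h n x)
    (hgunif : TendstoUniformlyOn g G atTop (closure Ω))
    (hhunif : TendstoUniformlyOn h H atTop (closure Ω))
    (p : ℕ → ℝ) (hp : Tendsto p atTop atTop)
    (heq : ∀ n, ∫ x in Ω, g n x ^ p n = ∫ x in Ω, h n x ^ p n) :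
    sSup (G '' closure Ω) = sSup (H '' closure Ω) := by
  have hK : IsCompact (closure Ω) := hb.isCompact_closure
  refine tendsto_nhds_unique
    (tendsto_rpow_inv_setIntegral_rpow_sSup volume ho hne hK hgc hgnn hgunif hp) ?_
  simpa only [heq] using
    tendsto_rpow_inv_setIntegral_rpow_sSup volume ho hne hK hhc hhnn hhunif hp

/-- If nonnegative continuous `g_n → g` and `h_n → h` uniformly on `cl Ω`, `p_n → ∞`,
and `∫_Ω g_n^{p_n} = ∫_Ω h_n^{p_n}` for all `n`, then `max_{cl Ω} g = max_{cl Ω} h`. -/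
theorem sup_limit_of_equal_integrals (N : ℕ) (Ω : Set (EuclideanSpace ℝ (Fin N)))
    (hne : Ω.Nonempty) (hb : Bornology.IsBounded Ω) (ho : IsOpen Ω)
    (g h : ℕ → EuclideanSpace ℝ (Fin N) → ℝ)
    (G H : EuclideanSpace ℝ (Fin N) → ℝ)
    (hgc : ∀ n, ContinuousOn (g n) (closure Ω))
    (hhc : ∀ n, ContinuousOn (h n) (closure Ω))
    (hGc : ContinuousOn G (closure Ω)) (hHc : ContinuousOn H (closure Ω))
    (hgnn : ∀ n, ∀ x ∈ closure Ω, 0 ≤ g n x)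
    (hhnn : ∀ n, ∀ x ∈ closure Ω, 0 ≤ h n x)
    (hgunif : TendstoUniformlyOn g G atTop (closure Ω))
    (hhunif : TendstoUniformlyOn h H atTop (closure Ω))
    (p : ℕ → ℝ) (hp : Tendsto p atTop atTop)
    (heq : ∀ n, ∫ x in Ω, g n x ^ p n = ∫ x in Ω, h n x ^ p n) :
    sSup (G '' closure Ω) = sSup (H '' closure Ω) :=
  sup_limit_of_equal_integrals_general N Ω hne hb ho g h G H hgc hhc hgnn hhnn hgunif hhunif p hp
    heq
end

section
/- Let Ω ⊂ ℝ^N be a nonempty bounded convex open set and let q > N be a real number. Then there exists a constant C > 0, depending only on q, N and Ω, such that for every continuously differentiable function v : ℝ^N → ℝ for which there exists a point x₀ ∈ Ω with v(x₀) = 0, one has (∫_Ω |v(x)|^q dx)^{1/q} ≤ C (∫_Ω ‖∇v(x)‖^q dx)^{1/q}. -/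
/-!
Along the segment from `x₀` to `x`, `‖v x‖ ≤ ‖x - x₀‖ ∫₀¹ ‖Dv (x₀ + t • (x - x₀))‖ dt`. Hölder's
inequality with the weight `t ^ β` on `(0, 1]` bounds `‖v x‖ ^ q` by a multiple of
`∫₀¹ ‖Dv (x₀ + t • (x - x₀))‖ ^ q t ^ β dt`, the constant being finite when `β < q - 1`. After
integrating over `Ω` and exchanging the integrals, the homothety `x ↦ x₀ + t • (x - x₀)`, which maps
the convex set `Ω` into itself and has Jacobian determinant `t ^ N`, bounds the inner integral by
`t ^ (β - N) ∫_Ω ‖Dv‖ ^ q`, integrable on `(0, 1]` when `β > N - 1`. Such a `β` exists as `q > N`.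
-/

open Real Set MeasureTheory Module
open scoped ENNReal

theorem enorm_sub_le_lintegral_fderiv_segment {E F : Type*} [NormedAddCommGroup E]
    [NormedSpace ℝ E] [NormedAddCommGroup F] [NormedSpace ℝ F] [CompleteSpace F] {v : E → F}
    (hv : ContDiff ℝ 1 v) (x y : E) :
    ‖v x - v y‖ₑ ≤ ‖x - y‖ₑ * ∫⁻ t in Ioc (0:ℝ) 1, ‖fderiv ℝ v (y + t • (x - y))‖ₑ := by
  have hγ : ∀ t : ℝ, HasDerivAt (fun s : ℝ => y + s • (x - y)) (x - y) t := fun t => by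
    simpa using ((hasDerivAt_id t).smul_const (x - y)).const_add y
  have hderiv : ∀ t : ℝ, HasDerivAt (fun s : ℝ => v (y + s • (x - y)))
      (fderiv ℝ v (y + t • (x - y)) (x - y)) t := fun t =>
    ((hv.differentiable one_ne_zero).differentiableAt.hasFDerivAt).comp_hasDerivAt t (hγ t)
  have hcont : Continuous fun t : ℝ => fderiv ℝ v (y + t • (x - y)) (x - y) :=
    ((hv.continuous_fderiv one_ne_zero).comp (continuous_const.add
      (continuous_id.smul continuous_const))).clm_apply continuous_const
  have hFTC : v x - v y = ∫ t in Ioc (0:ℝ) 1, fderiv ℝ v (y + t • (x - y)) (x - y) := by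
    rw [← intervalIntegral.integral_of_le zero_le_one,
      intervalIntegral.integral_eq_sub_of_hasDerivAt (fun t _ => hderiv t)
        (hcont.intervalIntegrable 0 1)]
    simp
  calc ‖v x - v y‖ₑ
      ≤ ∫⁻ t in Ioc (0:ℝ) 1, ‖fderiv ℝ v (y + t • (x - y)) (x - y)‖ₑ :=
        hFTC ▸ enorm_integral_le_lintegral_enorm _
    _ ≤ ∫⁻ t in Ioc (0:ℝ) 1, ‖fderiv ℝ v (y + t • (x - y))‖ₑ * ‖x - y‖ₑ :=
        lintegral_mono fun t => ContinuousLinearMap.le_opENorm _ _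
    _ = ‖x - y‖ₑ * ∫⁻ t in Ioc (0:ℝ) 1, ‖fderiv ℝ v (y + t • (x - y))‖ₑ := by
        rw [lintegral_mul_const' _ _ enorm_ne_top, mul_comm]

theorem lintegral_rpow_le_weighted {α : Type*} [MeasurableSpace α] {μ : Measure α} {p : ℝ}
    (hp : 1 < p) {G w : α → ℝ≥0∞} (hG : AEMeasurable G μ) (hw : AEMeasurable w μ)
    (hw₀ : ∀ᵐ x ∂μ, w x ≠ 0) (hw_top : ∀ᵐ x ∂μ, w x ≠ ∞) :
    (∫⁻ x, G x ∂μ) ^ p ≤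
      (∫⁻ x, w x ^ (-(p - 1)⁻¹) ∂μ) ^ (p - 1) * ∫⁻ x, G x ^ p * w x ∂μ := by
  set q := p / (p - 1)
  have hpq : p.HolderConjugate q := .conjExponent hp
  have hp₀ : 0 < p := by linarith
  have hp₁ : p - 1 ≠ 0 := by linarith
  have hsplit : ∀ᵐ x ∂μ, G x = (G x * w x ^ p⁻¹) * w x ^ (-p⁻¹) := by
    filter_upwards [hw₀, hw_top] with x h₀ h_top
    rw [mul_assoc, ← ENNReal.rpow_add _ _ h₀ h_top, add_neg_cancel, ENNReal.rpow_zero, mul_one]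
  have hholder := ENNReal.lintegral_mul_le_Lp_mul_Lq μ hpq
    (hG.mul (hw.pow_const p⁻¹)) (hw.pow_const (-p⁻¹))
  have hfirst : ∀ x, (G x * w x ^ p⁻¹) ^ p = G x ^ p * w x := fun x => by
    rw [ENNReal.mul_rpow_of_nonneg _ _ hp₀.le, ENNReal.rpow_inv_rpow hp₀.ne']
  have hsecond : ∀ x, (w x ^ (-p⁻¹)) ^ q = w x ^ (-(p - 1)⁻¹) := fun x => by
    rw [← ENNReal.rpow_mul]; congr 1; simp only [q]; field_simp
  simp only [Pi.mul_apply, hfirst, hsecond] at hholder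
  calc (∫⁻ x, G x ∂μ) ^ p
      ≤ ((∫⁻ x, G x ^ p * w x ∂μ) ^ (1 / p) * (∫⁻ x, w x ^ (-(p - 1)⁻¹) ∂μ) ^ (1 / q)) ^ p := by
        rw [lintegral_congr_ae hsplit]; gcongr
    _ = (∫⁻ x, w x ^ (-(p - 1)⁻¹) ∂μ) ^ (p - 1) * ∫⁻ x, G x ^ p * w x ∂μ := by
        rw [ENNReal.mul_rpow_of_nonneg _ _ hp₀.le, ← ENNReal.rpow_mul, ← ENNReal.rpow_mul,
          one_div_mul_cancel hp₀.ne', ENNReal.rpow_one, one_div_mul_eq_div,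
          hpq.div_conj_eq_sub_one, mul_comm]

theorem enorm_rpow_le_lintegral_weighted {E F : Type*} [NormedAddCommGroup E]
    [NormedSpace ℝ E] [NormedAddCommGroup F] [NormedSpace ℝ F] [CompleteSpace F] {v : E → F}
    (hv : ContDiff ℝ 1 v) {x₀ : E} (hv₀ : v x₀ = 0) (x : E) {q : ℝ} (hq : 1 < q) (β : ℝ) :
    ‖v x‖ₑ ^ q ≤ ‖x - x₀‖ₑ ^ q *
      (∫⁻ t in Ioc (0:ℝ) 1, ENNReal.ofReal t ^ (-β / (q - 1))) ^ (q - 1) *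
        ∫⁻ t in Ioc (0:ℝ) 1, ‖fderiv ℝ v (x₀ + t • (x - x₀))‖ₑ ^ q * ENNReal.ofReal t ^ β := by
  have hq₀ : 0 ≤ q := by linarith
  have hG : Continuous fun t : ℝ => ‖fderiv ℝ v (x₀ + t • (x - x₀))‖ₑ := by
    have := hv.continuous_fderiv one_ne_zero; fun_prop
  have hweight : ∀ t ∈ Ioc (0:ℝ) 1, (ENNReal.ofReal t ^ β) ^ (-(q - 1)⁻¹) =
      ENNReal.ofReal t ^ (-β / (q - 1)) := fun t _ => by
    rw [← ENNReal.rpow_mul]; ring_nf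
  have hw : ∀ᵐ t ∂volume.restrict (Ioc (0:ℝ) 1),
      ENNReal.ofReal t ^ β ≠ 0 ∧ ENNReal.ofReal t ^ β ≠ ∞ := by
    filter_upwards [ae_restrict_mem measurableSet_Ioc] with t ht
    simp [ht.1]
  have hholder := lintegral_rpow_le_weighted (μ := volume.restrict (Ioc (0:ℝ) 1)) hq
    hG.aemeasurable (w := fun t => ENNReal.ofReal t ^ β) (by fun_prop)
    (hw.mono fun _ => And.left) (hw.mono fun _ => And.right)
  calc ‖v x‖ₑ ^ q
      ≤ (‖x - x₀‖ₑ * ∫⁻ t in Ioc (0:ℝ) 1, ‖fderiv ℝ v (x₀ + t • (x - x₀))‖ₑ) ^ q := by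
        gcongr; simpa [hv₀] using enorm_sub_le_lintegral_fderiv_segment hv x x₀
    _ ≤ _ := by
        rw [ENNReal.mul_rpow_of_nonneg _ _ hq₀, mul_assoc]
        gcongr
        rwa [setLIntegral_congr_fun measurableSet_Ioc hweight] at hholder

theorem setLIntegral_Ioc_zero_one_rpow_lt_top {r : ℝ} (hr : -1 < r) :
    ∫⁻ t in Ioc (0:ℝ) 1, ENNReal.ofReal t ^ r < ∞ := by
  rw [setLIntegral_congr_fun measurableSet_Ioc fun t ht => ENNReal.ofReal_rpow_of_pos ht.1]
  exact (intervalIntegral.intervalIntegrable_rpow' hr).1.lintegral_lt_top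

theorem integral_norm_rpow_eq_toReal_lintegral {α F : Type*} [MeasurableSpace α] {μ : Measure α}
    [NormedAddCommGroup F] {f : α → F} (hf : AEStronglyMeasurable f μ) {p : ℝ} (hp : 0 ≤ p) :
    ∫ a, ‖f a‖ ^ p ∂μ = (∫⁻ a, ‖f a‖ₑ ^ p ∂μ).toReal := by
  rw [integral_eq_lintegral_of_nonneg_ae (ae_of_all _ fun a => by positivity)
    (hf.norm.aemeasurable.pow_const p).aestronglyMeasurable]
  simp_rw [← ENNReal.ofReal_rpow_of_nonneg (norm_nonneg _) hp, ofReal_norm]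

theorem setLIntegral_enorm_rpow_lt_top {E F : Type*} [NormedAddCommGroup E] [ProperSpace E]
    [MeasurableSpace E] [OpensMeasurableSpace E] {μ : Measure E} [IsFiniteMeasureOnCompacts μ]
    [NormedAddCommGroup F] {f : E → F} (hf : Continuous f) {s : Set E} (hs : Bornology.IsBounded s)
    {p : ℝ} (hp : 0 ≤ p) : ∫⁻ x in s, ‖f x‖ₑ ^ p ∂μ < ∞ := by
  have hK := hs.isCompact_closure
  calc ∫⁻ x in s, ‖f x‖ₑ ^ p ∂μ ≤ ∫⁻ x in closure s, ((‖f x‖₊ ^ p : NNReal) : ℝ≥0∞) ∂μ := by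
        simp_rw [ENNReal.coe_rpow_of_nonneg _ hp]
        exact lintegral_mono_set subset_closure
    _ < ∞ := setLIntegral_lt_top_of_isCompact hK.measure_lt_top.ne hK (by fun_prop)

theorem rpow_integral_norm_rpow_le_of_lintegral_le {α F G : Type*} [MeasurableSpace α]
    {μ : Measure α} [NormedAddCommGroup F] [NormedAddCommGroup G] {f : α → F} {g : α → G}
    (hf : AEStronglyMeasurable f μ) (hg : AEStronglyMeasurable g μ) {p : ℝ} (hp : 0 < p)
    {C : ℝ≥0∞} (hC : C ≠ ∞) (hg_fin : ∫⁻ a, ‖g a‖ₑ ^ p ∂μ ≠ ∞)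
    (h : ∫⁻ a, ‖f a‖ₑ ^ p ∂μ ≤ C * ∫⁻ a, ‖g a‖ₑ ^ p ∂μ) :
    (∫ a, ‖f a‖ ^ p ∂μ) ^ (1 / p) ≤ C.toReal ^ (1 / p) * (∫ a, ‖g a‖ ^ p ∂μ) ^ (1 / p) := by
  rw [integral_norm_rpow_eq_toReal_lintegral hf hp.le,
    integral_norm_rpow_eq_toReal_lintegral hg hp.le,
    ← Real.mul_rpow ENNReal.toReal_nonneg ENNReal.toReal_nonneg, ← ENNReal.toReal_mul]
  gcongr
  exact ENNReal.mul_ne_top hC hg_fin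

section AddHaar

variable {E : Type*} [NormedAddCommGroup E] [NormedSpace ℝ E] [MeasurableSpace E] [BorelSpace E]
  [FiniteDimensional ℝ E] (μ : Measure E) [μ.IsAddHaarMeasure]

theorem lintegral_comp_smul (f : E → ℝ≥0∞) {R : ℝ} (hR : R ≠ 0) :
    ∫⁻ x, f (R • x) ∂μ = ENNReal.ofReal |(R ^ finrank ℝ E)⁻¹| * ∫⁻ x, f x ∂μ := by
  rw [← smul_eq_mul, ← lintegral_smul_measure, ← Measure.map_addHaar_smul μ hR]
  exact (lintegral_map_equiv f
    (Homeomorph.smul (isUnit_iff_ne_zero.2 hR).unit).toMeasurableEquiv).symm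

theorem setLIntegral_comp_homothety_le {s : Set E} (hs : Convex ℝ s) {x₀ : E} (hx₀ : x₀ ∈ s)
    (g : E → ℝ≥0∞) {t : ℝ} (ht₀ : 0 < t) (ht₁ : t ≤ 1) :
    ∫⁻ x in s, g (x₀ + t • (x - x₀)) ∂μ ≤
      ENNReal.ofReal t ^ (-(finrank ℝ E : ℝ)) * ∫⁻ x in s, g x ∂μ := by
  have hscale : ENNReal.ofReal |(t ^ finrank ℝ E)⁻¹| = ENNReal.ofReal t ^ (-(finrank ℝ E : ℝ)) := by
    rw [ENNReal.ofReal_rpow_of_pos ht₀, Real.rpow_neg ht₀.le, Real.rpow_natCast,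
      abs_of_pos (by positivity)]
  have hhom : ∀ x : E, x₀ + t • (x - x₀) = t • x + (x₀ - t • x₀) := fun x => by module
  calc ∫⁻ x in s, g (x₀ + t • (x - x₀)) ∂μ
      ≤ ∫⁻ x in s, s.indicator g (x₀ + t • (x - x₀)) ∂μ := by
        refine lintegral_mono_ae ((ae_restrict_mem₀ (hs.nullMeasurableSet μ)).mono fun x hx => ?_)
        rw [indicator_of_mem (hs.add_smul_sub_mem hx₀ hx ⟨ht₀.le, ht₁⟩)]
    _ ≤ ∫⁻ x, s.indicator g (t • x + (x₀ - t • x₀)) ∂μ := by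
        simp only [hhom]; exact setLIntegral_le_lintegral _ _
    _ = ENNReal.ofReal t ^ (-(finrank ℝ E : ℝ)) * ∫⁻ x, s.indicator g x ∂μ := by
        rw [lintegral_comp_smul μ (fun y => s.indicator g (y + (x₀ - t • x₀))) ht₀.ne',
          lintegral_add_right_eq_self, hscale]
    _ ≤ ENNReal.ofReal t ^ (-(finrank ℝ E : ℝ)) * ∫⁻ x in s, g x ∂μ :=
        mul_le_mul_right (lintegral_indicator_le g s) _

theorem setLIntegral_lintegral_comp_homothety_le {s : Set E} (hs : Convex ℝ s) {x₀ : E}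
    (hx₀ : x₀ ∈ s) {g : E → ℝ≥0∞} (hg : Measurable g) {w : ℝ → ℝ≥0∞} (hw : Measurable w) :
    ∫⁻ x in s, (∫⁻ t in Ioc (0:ℝ) 1, g (x₀ + t • (x - x₀)) * w t) ∂μ ≤
      (∫⁻ t in Ioc (0:ℝ) 1, w t * ENNReal.ofReal t ^ (-(finrank ℝ E : ℝ))) *
        ∫⁻ x in s, g x ∂μ := by
  have hmeas : Measurable fun p : E × ℝ => g (x₀ + p.2 • (p.1 - x₀)) * w p.2 := by fun_prop
  rw [lintegral_lintegral_swap hmeas.aemeasurable]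
  calc ∫⁻ t in Ioc (0:ℝ) 1, ∫⁻ x in s, g (x₀ + t • (x - x₀)) * w t ∂μ
      = ∫⁻ t in Ioc (0:ℝ) 1, w t * ∫⁻ x in s, g (x₀ + t • (x - x₀)) ∂μ := by
        refine lintegral_congr fun t => ?_
        rw [lintegral_mul_const'' _ (by fun_prop), mul_comm]
    _ ≤ ∫⁻ t in Ioc (0:ℝ) 1, w t * (ENNReal.ofReal t ^ (-(finrank ℝ E : ℝ)) * ∫⁻ x in s, g x ∂μ) :=
        setLIntegral_mono_ae' measurableSet_Ioc (ae_of_all _ fun t ht => by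
          gcongr; exact setLIntegral_comp_homothety_le μ hs hx₀ g ht.1 ht.2)
    _ = _ := by
        simp only [← mul_assoc]
        exact lintegral_mul_const'' _ (by fun_prop)

theorem setLIntegral_enorm_rpow_le_fderiv_of_convex {F : Type*} [NormedAddCommGroup F]
    [NormedSpace ℝ F] [CompleteSpace F] {Ω : Set E} (hΩ : Convex ℝ Ω) {x₀ : E} (hx₀ : x₀ ∈ Ω)
    {v : E → F} (hv : ContDiff ℝ 1 v) (hv₀ : v x₀ = 0) {q : ℝ} (hq : 1 < q) (β : ℝ) :
    ∫⁻ x in Ω, ‖v x‖ₑ ^ q ∂μ ≤ Metric.ediam Ω ^ q *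
      (∫⁻ t in Ioc (0:ℝ) 1, ENNReal.ofReal t ^ (-β / (q - 1))) ^ (q - 1) *
        (∫⁻ t in Ioc (0:ℝ) 1, ENNReal.ofReal t ^ (β - finrank ℝ E)) *
          ∫⁻ x in Ω, ‖fderiv ℝ v x‖ₑ ^ q ∂μ := by
  set K := (∫⁻ t in Ioc (0:ℝ) 1, ENNReal.ofReal t ^ (-β / (q - 1))) ^ (q - 1)
  have hweight : ∀ t ∈ Ioc (0:ℝ) 1, ENNReal.ofReal t ^ β * ENNReal.ofReal t ^ (-(finrank ℝ E : ℝ)) =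
      ENNReal.ofReal t ^ (β - finrank ℝ E) := fun t ht => by
    rw [← ENNReal.rpow_add _ _ (by simp [ht.1]) ENNReal.ofReal_ne_top, sub_eq_add_neg]
  calc ∫⁻ x in Ω, ‖v x‖ₑ ^ q ∂μ
      ≤ ∫⁻ x in Ω, Metric.ediam Ω ^ q * K * (∫⁻ t in Ioc (0:ℝ) 1,
          ‖fderiv ℝ v (x₀ + t • (x - x₀))‖ₑ ^ q * ENNReal.ofReal t ^ β) ∂μ := by
        refine lintegral_mono_ae ((ae_restrict_mem₀ (hΩ.nullMeasurableSet μ)).mono fun x hx => ?_)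
        refine (enorm_rpow_le_lintegral_weighted hv hv₀ x hq β).trans ?_
        gcongr
        rw [← edist_eq_enorm_sub]
        exact Metric.edist_le_ediam_of_mem hx hx₀
    _ = Metric.ediam Ω ^ q * K * ∫⁻ x in Ω, (∫⁻ t in Ioc (0:ℝ) 1,
          ‖fderiv ℝ v (x₀ + t • (x - x₀))‖ₑ ^ q * ENNReal.ofReal t ^ β) ∂μ := by
        refine lintegral_const_mul'' _ (Measurable.lintegral_prod_right' (f := fun p : E × ℝ =>
          ‖fderiv ℝ v (x₀ + p.2 • (p.1 - x₀))‖ₑ ^ q * ENNReal.ofReal p.2 ^ β) ?_).aemeasurable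
        fun_prop
    _ ≤ _ := by
        rw [mul_assoc _ (∫⁻ t in Ioc (0:ℝ) 1, _),
          ← setLIntegral_congr_fun measurableSet_Ioc hweight]
        gcongr
        exact setLIntegral_lintegral_comp_homothety_le μ hΩ hx₀ (g := fun y => ‖fderiv ℝ v y‖ₑ ^ q)
          (by fun_prop) (by fun_prop)

theorem exists_rpow_setIntegral_le_fderiv_of_convex {F : Type*} [NormedAddCommGroup F]
    [NormedSpace ℝ F] [CompleteSpace F] {Ω : Set E} (hΩ : Convex ℝ Ω)
    (hb : Bornology.IsBounded Ω) {q : ℝ} (hq : 1 < q) (hqE : finrank ℝ E < q) :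
    ∃ C : ℝ, 0 < C ∧ ∀ v : E → F, ContDiff ℝ 1 v → (∃ x₀ ∈ Ω, v x₀ = 0) →
      (∫ x in Ω, ‖v x‖ ^ q ∂μ) ^ (1 / q) ≤ C * (∫ x in Ω, ‖fderiv ℝ v x‖ ^ q ∂μ) ^ (1 / q) := by
  obtain ⟨β, hβE, hβq⟩ : ∃ β, (finrank ℝ E : ℝ) - 1 < β ∧ β < q - 1 :=
    exists_between (by linarith)
  set C := Metric.ediam Ω ^ q *
    (∫⁻ t in Ioc (0:ℝ) 1, ENNReal.ofReal t ^ (-β / (q - 1))) ^ (q - 1) *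
      ∫⁻ t in Ioc (0:ℝ) 1, ENNReal.ofReal t ^ (β - finrank ℝ E)
  have hC : C ≠ ∞ := by
    have hK := setLIntegral_Ioc_zero_one_rpow_lt_top (r := -β / (q - 1))
      (by rw [neg_div, neg_lt_neg_iff, div_lt_one (by linarith)]; exact hβq)
    have hM := setLIntegral_Ioc_zero_one_rpow_lt_top (r := β - finrank ℝ E) (by linarith)
    exact ENNReal.mul_ne_top (ENNReal.mul_ne_top
      (ENNReal.rpow_ne_top_of_nonneg (by linarith) hb.ediam_ne_top)
      (ENNReal.rpow_ne_top_of_nonneg (by linarith) hK.ne)) hM.ne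
  refine ⟨C.toReal ^ (1 / q) + 1, by positivity, fun v hv ⟨x₀, hx₀, hv₀⟩ => ?_⟩
  have hDv : Continuous (fderiv ℝ v) := hv.continuous_fderiv one_ne_zero
  calc (∫ x in Ω, ‖v x‖ ^ q ∂μ) ^ (1 / q)
      ≤ C.toReal ^ (1 / q) * (∫ x in Ω, ‖fderiv ℝ v x‖ ^ q ∂μ) ^ (1 / q) :=
        rpow_integral_norm_rpow_le_of_lintegral_le hv.continuous.aestronglyMeasurable
          hDv.aestronglyMeasurable (by linarith) hC
          (setLIntegral_enorm_rpow_lt_top hDv hb (by linarith)).ne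
          (setLIntegral_enorm_rpow_le_fderiv_of_convex μ hΩ hx₀ hv hv₀ hq β)
    _ ≤ (C.toReal ^ (1 / q) + 1) * (∫ x in Ω, ‖fderiv ℝ v x‖ ^ q ∂μ) ^ (1 / q) := by
        gcongr
        linarith

end AddHaar

theorem morrey_poincare_general (N : ℕ) (Ω : Set (EuclideanSpace ℝ (Fin N)))
    (hb : Bornology.IsBounded Ω) (hconv : Convex ℝ Ω)
    (q : ℝ) (hq : (N : ℝ) < q) :
    ∃ C : ℝ, 0 < C ∧
      ∀ v : EuclideanSpace ℝ (Fin N) → ℝ, ContDiff ℝ 1 v →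
        (∃ x₀ ∈ Ω, v x₀ = 0) →
        (∫ x in Ω, |v x| ^ q) ^ (1 / q) ≤
          C * (∫ x in Ω, ‖fderiv ℝ v x‖ ^ q) ^ (1 / q) := by
  rcases lt_or_ge 1 q with hq₁ | hq₁
  · simp only [← Real.norm_eq_abs]
    exact exists_rpow_setIntegral_le_fderiv_of_convex volume hconv hb hq₁
      (by rwa [finrank_euclideanSpace_fin])
  · obtain rfl : N = 0 := by
      have : (N : ℝ) < 1 := hq.trans_le hq₁
      exact Nat.lt_one_iff.1 (by exact_mod_cast this)
    refine ⟨1, one_pos, fun v _ ⟨x₀, _, hv₀⟩ => ?_⟩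
    have hv : ∀ x, v x = 0 := fun x => by rw [Subsingleton.elim x x₀, hv₀]
    simp [hv, zero_rpow (by simpa using hq.ne')]

/-- Lemma 2.4: Morrey-type Poincaré inequality. For `q > N` there is a constant
`C = C(q,N,Ω) > 0` such that every `C¹` function `v` vanishing at some point of `Ω`
satisfies `‖v‖_{L^q(Ω)} ≤ C ‖∇v‖_{L^q(Ω)}`. -/
theorem morrey_poincare (N : ℕ) (Ω : Set (EuclideanSpace ℝ (Fin N)))
    (hne : Ω.Nonempty) (hb : Bornology.IsBounded Ω) (hconv : Convex ℝ Ω)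
    (ho : IsOpen Ω) (q : ℝ) (hq : (N : ℝ) < q) :
    ∃ C : ℝ, 0 < C ∧
      ∀ v : EuclideanSpace ℝ (Fin N) → ℝ, ContDiff ℝ 1 v →
        (∃ x₀ ∈ Ω, v x₀ = 0) →
        (∫ x in Ω, |v x| ^ q) ^ (1 / q) ≤
          C * (∫ x in Ω, ‖fderiv ℝ v x‖ ^ q) ^ (1 / q) :=
  morrey_poincare_general N Ω hb hconv q hq
end

section
/- Let Ω ⊂ ℝ^N be a nonempty bounded open set with closure cl(Ω), let α > 0 and β > 1 be real numbers, let w : cl(Ω) → ℝ be continuous with w ≥ 0 and w not identically zero on Ω, and let z : cl(Ω) → ℝ be continuous. Then there exists a constant K with inf_{cl(Ω)} z ≤ K ≤ sup_{cl(Ω)} z such that ∫_Ω w(x)^α · |z(x) − K|^{β−2} (z(x) − K) dx = 0. -/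
open Real Set MeasureTheory

/-! Since `t ↦ |t| ^ (β - 2) * t` is continuous and has the sign of `t`, the function
`K ↦ ∫ w ^ α |z - K| ^ (β - 2) (z - K)` is continuous by dominated convergence (everything is
bounded on the compact closure), nonnegative at `K = inf z` and nonpositive at `K = sup z`;
the intermediate value theorem gives the zero. -/

section IntegralShift

variable {X : Type*} [MeasurableSpace X] {μ : Measure X} {w f : X → ℝ} {φ : ℝ → ℝ} {m M : ℝ}

theorem continuousOn_integral_mul_comp_sub (hw : Integrable w μ) (hφ : Continuous φ)
    (hf : AEStronglyMeasurable f μ) (hfmM : ∀ᵐ x ∂μ, f x ∈ Icc m M) :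
    ContinuousOn (fun K => ∫ x, w x * φ (f x - K) ∂μ) (Icc m M) := by
  obtain ⟨B, hB⟩ := (isCompact_Icc (a := m - M) (b := M - m)).exists_bound_of_continuousOn
    hφ.continuousOn
  refine continuousOn_of_dominated (bound := fun x => ‖w x‖ * B)
    (fun K _ => hw.aestronglyMeasurable.mul
      (hφ.comp_aestronglyMeasurable (hf.sub aestronglyMeasurable_const)))
    (fun K hK => ?_) (hw.norm.mul_const B) (.of_forall fun x => ?_)
  · filter_upwards [hfmM] with x hx
    rw [norm_mul]
    gcongr
    exact hB _ ⟨by linarith [hx.1, hK.2], by linarith [hx.2, hK.1]⟩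
  · exact continuousOn_const.mul (hφ.comp_continuousOn (continuousOn_const.sub continuousOn_id))

theorem exists_mem_Icc_integral_mul_comp_sub_eq_zero (hw : Integrable w μ) (hw0 : 0 ≤ᵐ[μ] w)
    (hφ : Continuous φ) (hφ_nonneg : ∀ t, 0 ≤ t → 0 ≤ φ t) (hφ_nonpos : ∀ t ≤ 0, φ t ≤ 0)
    (hf : AEStronglyMeasurable f μ) (hfmM : ∀ᵐ x ∂μ, f x ∈ Icc m M) (hmM : m ≤ M) :
    ∃ K ∈ Icc m M, ∫ x, w x * φ (f x - K) ∂μ = 0 := by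
  have h_at_M : ∫ x, w x * φ (f x - M) ∂μ ≤ 0 := by
    refine integral_nonpos_of_ae ?_
    filter_upwards [hw0, hfmM] with x hwx hx
    exact mul_nonpos_of_nonneg_of_nonpos hwx (hφ_nonpos _ (by linarith [hx.2]))
  have h_at_m : 0 ≤ ∫ x, w x * φ (f x - m) ∂μ := by
    refine integral_nonneg_of_ae ?_
    filter_upwards [hw0, hfmM] with x hwx hx
    exact mul_nonneg hwx (hφ_nonneg _ (by linarith [hx.1]))
  exact intermediate_value_Icc' hmM (continuousOn_integral_mul_comp_sub hw hφ hf hfmM)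
    ⟨h_at_M, h_at_m⟩

end IntegralShift

theorem abs_abs_rpow_sub_two_mul_self {β : ℝ} (hβ : 1 < β) (t : ℝ) :
    |(|t| ^ (β - 2)) * t| = |t| ^ (β - 1) := by
  rcases eq_or_ne t 0 with rfl | ht
  · simp [zero_rpow (by linarith : β - 1 ≠ 0)]
  · rw [abs_mul, abs_of_nonneg (rpow_nonneg (abs_nonneg t) _),
      show β - 1 = (β - 2) + 1 by ring, rpow_add_one (abs_ne_zero.2 ht)]

theorem continuous_abs_rpow_sub_two_mul_self {β : ℝ} (hβ : 1 < β) :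
    Continuous fun t : ℝ => |t| ^ (β - 2) * t := by
  refine continuous_iff_continuousAt.2 fun t => ?_
  rcases eq_or_ne t 0 with rfl | ht
  · -- at the origin the exponent `β - 2` may be negative; squeeze by `|t| ^ (β - 1) → 0`
    have h : ContinuousAt (fun s : ℝ => |s| ^ (β - 1)) 0 :=
      (continuousAt_rpow_const _ _ (Or.inr (by linarith))).comp continuous_abs.continuousAt
    rw [ContinuousAt, mul_zero]
    refine squeeze_zero_norm (fun s => (abs_abs_rpow_sub_two_mul_self hβ s).le) ?_
    simpa [zero_rpow (by linarith : β - 1 ≠ 0)] using h.tendsto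
  · exact ((continuousAt_rpow_const _ _ (Or.inl (abs_ne_zero.2 ht))).comp
      continuous_abs.continuousAt).mul continuousAt_id

theorem normalizing_constant_exists_general (N : ℕ) (Ω : Set (EuclideanSpace ℝ (Fin N)))
    (hb : Bornology.IsBounded Ω)
    (α β : ℝ) (hα : 0 < α) (hβ : 1 < β)
    (w z : EuclideanSpace ℝ (Fin N) → ℝ)
    (hw : ContinuousOn w (closure Ω)) (hz : ContinuousOn z (closure Ω))
    (hwnn : ∀ x ∈ closure Ω, 0 ≤ w x) :
    ∃ K : ℝ, sInf (z '' closure Ω) ≤ K ∧ K ≤ sSup (z '' closure Ω) ∧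
      ∫ x in Ω, w x ^ α * (|z x - K| ^ (β - 2) * (z x - K)) = 0 := by
  have hc : IsCompact (closure Ω) := hb.isCompact_closure
  have hzc : IsCompact (z '' closure Ω) := hc.image_of_continuousOn hz
  have hΩ_le : volume.restrict Ω ≤ volume.restrict (closure Ω) :=
    Measure.restrict_mono subset_closure le_rfl
  have h_mem : ∀ᵐ x ∂volume.restrict Ω, x ∈ closure Ω :=
    ae_mono hΩ_le (ae_restrict_mem isClosed_closure.measurableSet)
  have hwα : IntegrableOn (fun x => w x ^ α) (closure Ω) :=
    (hw.rpow_const fun _ _ => Or.inr hα.le).integrableOn_compact hc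
  obtain ⟨K, ⟨hmK, hKM⟩, hK⟩ := exists_mem_Icc_integral_mul_comp_sub_eq_zero
    (hwα.mono_set subset_closure) (h_mem.mono fun x hx => rpow_nonneg (hwnn x hx) α)
    (continuous_abs_rpow_sub_two_mul_self hβ) (fun t ht => by positivity)
    (fun t ht => mul_nonpos_of_nonneg_of_nonpos (rpow_nonneg (abs_nonneg t) _) ht)
    ((hz.aestronglyMeasurable_of_isCompact hc isClosed_closure.measurableSet).mono_measure hΩ_le)
    (h_mem.mono fun x hx =>
      ⟨csInf_le hzc.bddBelow ⟨x, hx, rfl⟩, le_csSup hzc.bddAbove ⟨x, hx, rfl⟩⟩)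
    (Real.sInf_le_sSup _ hzc.bddBelow hzc.bddAbove)
  exact ⟨K, hmK, hKM, hK⟩

/-- Existence of the normalizing constant `K`: for continuous `w ≥ 0`, `w ≢ 0` on `Ω`,
continuous `z`, `α > 0` and `β > 1`, there is `K` with
`inf_{cl Ω} z ≤ K ≤ sup_{cl Ω} z` and `∫_Ω w^α |z-K|^{β-2}(z-K) = 0`. -/
theorem normalizing_constant_exists (N : ℕ) (Ω : Set (EuclideanSpace ℝ (Fin N)))
    (hne : Ω.Nonempty) (hb : Bornology.IsBounded Ω) (ho : IsOpen Ω)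
    (α β : ℝ) (hα : 0 < α) (hβ : 1 < β)
    (w z : EuclideanSpace ℝ (Fin N) → ℝ)
    (hw : ContinuousOn w (closure Ω)) (hz : ContinuousOn z (closure Ω))
    (hwnn : ∀ x ∈ closure Ω, 0 ≤ w x)
    (hw0 : ∃ x ∈ Ω, w x ≠ 0) :
    ∃ K : ℝ, sInf (z '' closure Ω) ≤ K ∧ K ≤ sSup (z '' closure Ω) ∧
      ∫ x in Ω, w x ^ α * (|z x - K| ^ (β - 2) * (z x - K)) = 0 :=
  normalizing_constant_exists_general N Ω hb α β hα hβ w z hw hz hwnn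
end
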